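/- arXiv:2501.05958 — 11 statements merged into one kernel-verified Lean document; each statement's English description precedes it below -/
import Mathlib

section
/- Let Ω be a type, K, N ≥ 1 natural numbers, φ : Fin K → (Ω → ℂ) a linearly independent family of functions, and X : (Fin N → Fin K) → ℂ a tensor. Define f : (Fin N → Ω) → ℂ by f(r) = ∑_{k : Fin N → Fin K} X(k) · ∏_j φ_{k(j)}(r(j)). Then the least natural number p for which there exist functions ψ : Fin p → Fin N → (Ω → ℂ) with each ψ(i)(j) lying in the ℂ-span of {φ_1, …, φ_K} and f(r) = ∑_{i=1}^p ∏_j ψ(i)(j)(r(j)) for all r, equals the CP rank of X. -/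
open scoped BigOperators

/-- The CP (canonical polyadic) rank of an `N`-th order tensor of dimension `K` over `ℂ`:
the least `p` such that the tensor is a sum of `p` elementary tensor products. -/
noncomputable def cpRank {N K : ℕ} (X : (Fin N → Fin K) → ℂ) : ℕ :=
  sInf {p : ℕ | ∃ x : Fin p → Fin N → Fin K → ℂ,
    ∀ k : Fin N → Fin K, X k = ∑ i, ∏ j, x i j (k j)}

/-- An `N`-th order tensor is antisymmetric if it changes sign under any permutation
of its indices according to the sign of the permutation. -/
def IsAntisymTensor {N K : ℕ} (X : (Fin N → Fin K) → ℂ) : Prop :=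
  ∀ (π : Equiv.Perm (Fin N)) (k : Fin N → Fin K),
    X (k ∘ π) = ((Equiv.Perm.sign π : ℤ) : ℂ) * X k

/-- The determinant tensor: `E ℓ = sgn ℓ` if `ℓ` is a permutation of `Fin N`, `0` otherwise. -/
noncomputable def detTensor (N : ℕ) : (Fin N → Fin N) → ℂ :=
  fun ℓ => ∑ π : Equiv.Perm (Fin N),
    if ℓ = ⇑π then ((Equiv.Perm.sign π : ℤ) : ℂ) else 0

/-- The basis antisymmetric tensor associated with `u : Fin N → Fin K`:
`E_u ℓ = sgn π` if `ℓ = u ∘ π` for a (necessarily unique, when `u` is injective)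
permutation `π` of `Fin N`, and `0` otherwise. -/
noncomputable def basisTensor {N K : ℕ} (u : Fin N → Fin K) : (Fin N → Fin K) → ℂ :=
  fun ℓ => ∑ π : Equiv.Perm (Fin N),
    if ℓ = u ∘ ⇑π then ((Equiv.Perm.sign π : ℤ) : ℂ) else 0

/-- A function on `N`-tuples is antisymmetric if it changes sign under any permutation
of its arguments according to the sign of the permutation. -/
def IsAntisymFun {N : ℕ} {Ω : Type*} (f : (Fin N → Ω) → ℂ) : Prop :=
  ∀ (π : Equiv.Perm (Fin N)) (r : Fin N → Ω),
    f (r ∘ π) = ((Equiv.Perm.sign π : ℤ) : ℂ) * f r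

/-!
Expanding each factor `ψ i j = ∑ c, x i j c • φ c` of a decomposition of `f` turns it into the
expansion of `f` in the products `r ↦ ∏ j, φ (k j) (r j)` with coefficient tensor
`k ↦ ∑ i, ∏ j, x i j (k j)`. These products are linearly independent (by induction on `N`), so
that tensor must be `X`: decompositions of `f` with `p` terms are exactly CP decompositions of
`X` with `p` terms.
-/

section

variable {R Ω ι : Type*} [Fintype ι]

theorem LinearIndependent.fin_pi_prod [CommRing R] {φ : ι → Ω → R}
    (hφ : LinearIndependent R φ) :
    ∀ N : ℕ, LinearIndependent R fun (k : Fin N → ι) (r : Fin N → Ω) => ∏ j, φ (k j) (r j)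
  | 0 => Fintype.linearIndependent_iff.mpr fun c hc k => by
    simpa [Subsingleton.elim k default] using congrFun hc default
  | N + 1 => by
    have ih := Fintype.linearIndependent_iff.mp (hφ.fin_pi_prod N)
    rw [Fintype.linearIndependent_iff] at hφ ⊢
    intro c hc k
    -- Freezing all variables but the first, the relation becomes one among the `φ k₀`.
    have hslice : ∀ k₀ (r' : Fin N → Ω),
        ∑ k', c (Fin.cons k₀ k') * ∏ j, φ (k' j) (r' j) = 0 := by
      intro k₀ r'
      refine hφ (fun k₀ => ∑ k', c (Fin.cons k₀ k') * ∏ j, φ (k' j) (r' j))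
        (funext fun ω => ?_) k₀
      have hcons := congrFun hc (Fin.cons ω r')
      rw [← (Fin.consEquiv fun _ => ι).sum_comp, Fintype.sum_prod_type] at hcons
      simp only [Fin.consEquiv, Equiv.coe_fn_mk, Fin.prod_univ_succ, Fin.cons_zero,
        Fin.cons_succ, Finset.sum_apply, Pi.smul_apply, Pi.zero_apply, smul_eq_mul,
        Finset.sum_mul] at hcons ⊢
      rw [← hcons]
      exact Finset.sum_congr rfl fun _ _ => Finset.sum_congr rfl fun _ _ => by ring
    simpa using ih (fun k' => c (Fin.cons (k 0) k'))
      (funext fun r' => by simpa using hslice (k 0) r') (Fin.tail k)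

theorem sum_prod_sum_mul_eq [CommSemiring R] {p N : ℕ} (x : Fin p → Fin N → ι → R)
    (φ : ι → Ω → R) (r : Fin N → Ω) :
    ∑ i, ∏ j, ∑ c, x i j c * φ c (r j) =
      ∑ k : Fin N → ι, (∑ i, ∏ j, x i j (k j)) * ∏ j, φ (k j) (r j) := by
  simp_rw [Fintype.prod_sum, Finset.prod_mul_distrib, Finset.sum_mul]
  exact Finset.sum_comm

variable [CommRing R] {p N : ℕ} {φ : ι → Ω → R}

theorem sum_mul_prod_eq_sum_prod_iff (hφ : LinearIndependent R φ) (X : (Fin N → ι) → R)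
    (x : Fin p → Fin N → ι → R) :
    (∀ r : Fin N → Ω, ∑ k, X k * ∏ j, φ (k j) (r j) =
        ∑ i, ∏ j, (∑ c, x i j c • φ c) (r j)) ↔
      ∀ k, X k = ∑ i, ∏ j, x i j (k j) := by
  have hinj := linearIndependent_iff_injective_fintypeLinearCombination.mp (hφ.fin_pi_prod N)
  simp only [Finset.sum_apply, Pi.smul_apply, smul_eq_mul, sum_prod_sum_mul_eq]
  rw [← funext_iff, ← funext_iff, ← hinj.eq_iff]
  simp only [Fintype.linearCombination_apply, funext_iff, Finset.sum_apply, Pi.smul_apply,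
    smul_eq_mul]

theorem exists_span_decomp_iff_exists_cp_decomp (hφ : LinearIndependent R φ)
    (X : (Fin N → ι) → R) :
    (∃ ψ : Fin p → Fin N → Ω → R, (∀ i j, ψ i j ∈ Submodule.span R (Set.range φ)) ∧
        ∀ r : Fin N → Ω, ∑ k, X k * ∏ j, φ (k j) (r j) = ∑ i, ∏ j, ψ i j (r j)) ↔
      ∃ x : Fin p → Fin N → ι → R, ∀ k, X k = ∑ i, ∏ j, x i j (k j) := by
  constructor
  · rintro ⟨ψ, hspan, hψ⟩
    choose x hx using fun i j => (Submodule.mem_span_range_iff_exists_fun R).mp (hspan i j)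
    exact ⟨x, (sum_mul_prod_eq_sum_prod_iff hφ X x).mp (by simpa only [hx] using hψ)⟩
  · rintro ⟨x, hx⟩
    exact ⟨_, fun i j => (Submodule.mem_span_range_iff_exists_fun R).mpr ⟨x i j, rfl⟩,
      (sum_mul_prod_eq_sum_prod_iff hφ X x).mpr hx⟩

end

theorem tpfRank_eq_cpRank_general {Ω : Type*} {K N : ℕ}
    (φ : Fin K → Ω → ℂ) (hφ : LinearIndependent ℂ φ)
    (X : (Fin N → Fin K) → ℂ) (f : (Fin N → Ω) → ℂ)
    (hf : ∀ r : Fin N → Ω, f r = ∑ k : Fin N → Fin K, X k * ∏ j, φ (k j) (r j)) :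
    sInf {p : ℕ | ∃ ψ : Fin p → Fin N → Ω → ℂ,
        (∀ i j, ψ i j ∈ Submodule.span ℂ (Set.range φ)) ∧
        ∀ r : Fin N → Ω, f r = ∑ i, ∏ j, ψ i j (r j)}
      = cpRank X := by
  simp only [hf]
  exact congrArg sInf (Set.ext fun p => exists_span_decomp_iff_exists_cp_decomp hφ X)

theorem tpfRank_eq_cpRank {Ω : Type*} {K N : ℕ} (hK : 1 ≤ K) (hN : 1 ≤ N)
    (φ : Fin K → Ω → ℂ) (hφ : LinearIndependent ℂ φ)
    (X : (Fin N → Fin K) → ℂ) (f : (Fin N → Ω) → ℂ)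
    (hf : ∀ r : Fin N → Ω, f r = ∑ k : Fin N → Fin K, X k * ∏ j, φ (k j) (r j)) :
    sInf {p : ℕ | ∃ ψ : Fin p → Fin N → Ω → ℂ,
        (∀ i j, ψ i j ∈ Submodule.span ℂ (Set.range φ)) ∧
        ∀ r : Fin N → Ω, f r = ∑ i, ∏ j, ψ i j (r j)}
      = cpRank X :=
  tpfRank_eq_cpRank_general φ hφ X f hf
end

section
/- Let Ω be a type, K, N ≥ 1 natural numbers, φ : Fin K → (Ω → ℂ) a linearly independent family of functions, and X : (Fin N → Fin K) → ℂ a tensor. Define f : (Fin N → Ω) → ℂ by f(r) = ∑_{k : Fin N → Fin K} X(k) · ∏_j φ_{k(j)}(r(j)). If f is antisymmetric, i.e., f(r ∘ π) = sgn(π) · f(r) for every permutation π of Fin N and every r, then X is antisymmetric, i.e., X(k ∘ π) = sgn(π) · X(k) for every permutation π and every k; moreover, if f is not identically zero then X is not identically zero. -/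
open scoped BigOperators

/-!
The products `r ↦ ∏ j, φ (k j) (r j)` of a linearly independent family `φ` are again linearly
independent (induct on `N`, freezing all but the first argument). Hence the coefficient tensor
`X` is determined by `f`. Permuting the arguments of `f` permutes the indices of `X`, so the
antisymmetry of `f` transfers to `X`.
-/

section ProductFamily

variable {R Ω ι : Type*} [CommRing R] [Fintype ι]

theorem sum_mul_prod_cons_eq {N : ℕ} (c : (Fin (N + 1) → ι) → R) (φ : ι → Ω → R)
    (ω : Ω) (r : Fin N → Ω) :
    ∑ k, c k * ∏ j, φ (k j) ((Fin.cons ω r : Fin (N + 1) → Ω) j) =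
      ∑ i, (∑ k, c (Fin.cons i k) * ∏ j, φ (k j) (r j)) * φ i ω := by
  rw [← (Fin.consEquiv fun _ => ι).sum_comp, Fintype.sum_prod_type]
  refine Finset.sum_congr rfl fun i _ => ?_
  rw [Finset.sum_mul]
  refine Finset.sum_congr rfl fun k _ => ?_
  simp only [Fin.consEquiv, Equiv.coe_fn_mk, Fin.prod_univ_succ, Fin.cons_zero, Fin.cons_succ]
  ring

theorem LinearIndependent.finProd {φ : ι → Ω → R} (hφ : LinearIndependent R φ) (N : ℕ) :
    LinearIndependent R fun (k : Fin N → ι) (r : Fin N → Ω) => ∏ j, φ (k j) (r j) := by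
  rw [Fintype.linearIndependent_iff]
  induction N with
  | zero =>
    intro c hc k
    simpa [Subsingleton.elim k default] using congr_fun hc finZeroElim
  | succ N ih =>
    intro c hc k
    have hrow : ∀ i, ∑ k', c (Fin.cons i k') • (fun r : Fin N → Ω => ∏ j, φ (k' j) (r j)) = 0 := by
      intro i
      funext r
      simp only [Finset.sum_apply, Pi.smul_apply, smul_eq_mul, Pi.zero_apply]
      refine Fintype.linearIndependent_iff.mp hφ
        (fun i => ∑ k', c (Fin.cons i k') * ∏ j, φ (k' j) (r j)) ?_ i
      funext ω
      have := congr_fun hc (Fin.cons ω r)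
      simp only [Finset.sum_apply, Pi.smul_apply, smul_eq_mul, Pi.zero_apply] at this ⊢
      rwa [sum_mul_prod_cons_eq] at this
    simpa [Fin.cons_self_tail] using ih _ (hrow (k 0)) (Fin.tail k)

theorem sum_mul_prod_comp_perm {N : ℕ} (X : (Fin N → ι) → R) (φ : ι → Ω → R)
    (π : Equiv.Perm (Fin N)) (r : Fin N → Ω) :
    ∑ k, X k * ∏ j, φ (k j) ((r ∘ π) j) = ∑ k, X (k ∘ π) * ∏ j, φ (k j) (r j) := by
  refine Fintype.sum_equiv (Equiv.arrowCongr π (Equiv.refl ι)) _ _ fun k => ?_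
  congr 1
  · congr 1
    ext j
    simp
  · simpa using Equiv.prod_comp π fun j => φ (k (π.symm j)) (r j)

end ProductFamily

theorem antisym_fun_implies_antisym_tensor_general {Ω : Type*} {K N : ℕ}
    (φ : Fin K → Ω → ℂ) (hφ : LinearIndependent ℂ φ)
    (X : (Fin N → Fin K) → ℂ) (f : (Fin N → Ω) → ℂ)
    (hf : ∀ r : Fin N → Ω, f r = ∑ k : Fin N → Fin K, X k * ∏ j, φ (k j) (r j))
    (hanti : IsAntisymFun f) :
    IsAntisymTensor X ∧ (f ≠ 0 → X ≠ 0) := by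
  have hcoeff := Fintype.linearIndependent_iffₛ.mp (hφ.finProd N)
  refine ⟨fun π k => ?_, fun hf0 hX0 => hf0 (funext fun r => by simp [hf, hX0])⟩
  refine hcoeff (fun m => X (m ∘ π)) (fun m => (Equiv.Perm.sign π : ℤ) * X m) ?_ k
  funext r
  simp only [Finset.sum_apply, Pi.smul_apply, smul_eq_mul]
  calc ∑ m, X (m ∘ π) * ∏ j, φ (m j) (r j) = f (r ∘ π) := by
        rw [hf, sum_mul_prod_comp_perm]
    _ = (Equiv.Perm.sign π : ℤ) * f r := hanti π r
    _ = ∑ m, (Equiv.Perm.sign π : ℤ) * X m * ∏ j, φ (m j) (r j) := by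
        simp only [hf, Finset.mul_sum, mul_assoc]

theorem antisym_fun_implies_antisym_tensor {Ω : Type*} {K N : ℕ}
    (hK : 1 ≤ K) (hN : 1 ≤ N)
    (φ : Fin K → Ω → ℂ) (hφ : LinearIndependent ℂ φ)
    (X : (Fin N → Fin K) → ℂ) (f : (Fin N → Ω) → ℂ)
    (hf : ∀ r : Fin N → Ω, f r = ∑ k : Fin N → Fin K, X k * ∏ j, φ (k j) (r j))
    (hanti : IsAntisymFun f) :
    IsAntisymTensor X ∧ (f ≠ 0 → X ≠ 0) :=
  antisym_fun_implies_antisym_tensor_general φ hφ X f hf hanti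
end

section
/- Let Ω be a type, K ≥ N ≥ 1 natural numbers, and φ : Fin K → (Ω → ℂ) a linearly independent family of functions. Suppose f : (Fin N → Ω) → ℂ is antisymmetric, not identically zero, and admits a representation f(r) = ∑_{i=1}^p ∏_j ψ(i)(j)(r(j)) where each ψ(i)(j) lies in the ℂ-span of {φ_1, …, φ_K}. Then p ≥ sInf { rank_cp(Y) : Y is a nonzero antisymmetric N-th order tensor of dimension K over ℂ }. -/
/-!
Expanding every `ψ i j` in the family `φ` writes `f r = ∑ k, X k * ∏ j, φ (k j) (r j)` with
coefficient tensor `X k = ∑ i, ∏ j, c i j (k j)`, whose CP rank is at most `p` by construction.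
The product functions `r ↦ ∏ j, φ (k j) (r j)` are linearly independent, so comparing coefficients
transfers the antisymmetry of `f` to `X`, and `f ≠ 0` forces `X ≠ 0`.
-/

open scoped BigOperators

section ProductFamilies

variable {R Ω ι : Type*} [CommSemiring R]

theorem LinearIndependent.mul_apply {α β κ : Type*} [Fintype ι] [Fintype κ]
    {φ : ι → α → R} {χ : κ → β → R} (hφ : LinearIndependent R φ) (hχ : LinearIndependent R χ) :
    LinearIndependent R fun (ik : ι × κ) (ab : α × β) => φ ik.1 ab.1 * χ ik.2 ab.2 := by
  rw [Fintype.linearIndependent_iffₛ] at *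
  intro f g hfg ik
  have hcoeff : ∀ i b, ∑ k, f (i, k) * χ k b = ∑ k, g (i, k) * χ k b := by
    intro i b
    refine hφ (fun i => ∑ k, f (i, k) * χ k b) (fun i => ∑ k, g (i, k) * χ k b) ?_ i
    funext a
    have := congrFun hfg (a, b)
    simp only [Finset.sum_apply, Pi.smul_apply, smul_eq_mul, Fintype.sum_prod_type] at this ⊢
    simpa only [Finset.sum_mul, mul_assoc, mul_comm (χ _ b)] using this
  refine hχ (fun k => f (ik.1, k)) (fun k => g (ik.1, k)) ?_ ik.2
  funext b
  simpa only [Finset.sum_apply, Pi.smul_apply, smul_eq_mul] using hcoeff ik.1 b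

def prodFamily (φ : ι → Ω → R) (N : ℕ) (k : Fin N → ι) (r : Fin N → Ω) : R :=
  ∏ j, φ (k j) (r j)

theorem linearIndependent_prodFamily [Fintype ι] {φ : ι → Ω → R}
    (hφ : LinearIndependent R φ) : ∀ N, LinearIndependent R (prodFamily φ N)
  | 0 => by
    rw [Fintype.linearIndependent_iffₛ]
    intro f g hfg k
    simpa [prodFamily, Subsingleton.elim k default] using congrFun hfg default
  | n + 1 => by
    -- Via `Fin.consEquiv`, `prodFamily φ (n + 1)` is the product of `φ` and `prodFamily φ n`.
    have hcons := (hφ.mul_apply (linearIndependent_prodFamily hφ n)).map_injOn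
      (LinearEquiv.funCongrLeft R R (Fin.consEquiv fun _ => Ω).symm).toLinearMap
      (LinearEquiv.injective _).injOn
    convert hcons.comp _ (Fin.consEquiv fun _ => ι).symm.injective using 1
    funext k r
    exact Fin.prod_univ_succ _

theorem prodFamily_comp_perm (φ : ι → Ω → R) {N : ℕ} (π : Equiv.Perm (Fin N))
    (k : Fin N → ι) (r : Fin N → Ω) : prodFamily φ N (k ∘ π) (r ∘ π) = prodFamily φ N k r :=
  Equiv.prod_comp π fun j => φ (k j) (r j)

theorem sum_prod_sum_smul_eq_sum_mul_prodFamily [Fintype ι] [DecidableEq ι]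
    (φ : ι → Ω → R) {p N : ℕ} (c : Fin p → Fin N → ι → R) (r : Fin N → Ω) :
    ∑ i, ∏ j, (∑ m, c i j m • φ m) (r j) =
      ∑ k, (∑ i, ∏ j, c i j (k j)) * prodFamily φ N k r := by
  simp only [Finset.sum_apply, Pi.smul_apply, smul_eq_mul, Fintype.prod_sum, prodFamily,
    Finset.sum_mul, ← Finset.prod_mul_distrib]
  exact Finset.sum_comm

end ProductFamilies

theorem isAntisymTensor_of_isAntisymFun {Ω : Type*} {K N : ℕ} {φ : Fin K → Ω → ℂ}
    (hφ : LinearIndependent ℂ φ) {X : (Fin N → Fin K) → ℂ}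
    (hX : IsAntisymFun fun r => ∑ k, X k * prodFamily φ N k r) : IsAntisymTensor X := by
  intro π
  have hreindex : ∀ r, ∑ k, X (k ∘ π) * prodFamily φ N k r =
      ∑ k, X k * prodFamily φ N k (r ∘ π) := fun r =>
    Fintype.sum_equiv (π.symm.arrowCongr (Equiv.refl _)) _ _ fun k => by
      rw [← prodFamily_comp_perm φ π k r]; rfl
  refine Fintype.linearIndependent_iffₛ.mp (linearIndependent_prodFamily hφ N)
    (fun k => X (k ∘ π)) (fun k => ((Equiv.Perm.sign π : ℤ) : ℂ) * X k) (funext fun r => ?_)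
  simpa [Finset.sum_apply, hreindex, mul_assoc, Finset.mul_sum] using hX π r

theorem cpRank_sum_prod_le {N K p : ℕ} (x : Fin p → Fin N → Fin K → ℂ) :
    cpRank (fun k => ∑ i, ∏ j, x i j (k j)) ≤ p :=
  Nat.sInf_le ⟨x, fun _ => rfl⟩

theorem tpf_rank_ge_min_cpRank_general {Ω : Type*} {K N : ℕ}
    (φ : Fin K → Ω → ℂ) (hφ : LinearIndependent ℂ φ)
    (f : (Fin N → Ω) → ℂ) (hanti : IsAntisymFun f) (hf0 : f ≠ 0)
    {p : ℕ} (ψ : Fin p → Fin N → Ω → ℂ)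
    (hspan : ∀ i j, ψ i j ∈ Submodule.span ℂ (Set.range φ))
    (hrep : ∀ r : Fin N → Ω, f r = ∑ i, ∏ j, ψ i j (r j)) :
    sInf {q : ℕ | ∃ Y : (Fin N → Fin K) → ℂ,
        IsAntisymTensor Y ∧ Y ≠ 0 ∧ cpRank Y = q} ≤ p := by
  choose c hc using fun i j => (Submodule.mem_span_range_iff_exists_fun ℂ).mp (hspan i j)
  set X : (Fin N → Fin K) → ℂ := fun k => ∑ i, ∏ j, c i j (k j)
  have hfX : f = fun r => ∑ k, X k * prodFamily φ N k r := by
    funext r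
    rw [hrep, ← sum_prod_sum_smul_eq_sum_mul_prodFamily, funext₂ fun i j => (hc i j).symm]
  have hX0 : X ≠ 0 := by
    intro hX
    exact hf0 (funext fun r => by simp [hfX, hX])
  calc sInf {q | ∃ Y : (Fin N → Fin K) → ℂ, IsAntisymTensor Y ∧ Y ≠ 0 ∧ cpRank Y = q}
      ≤ cpRank X := Nat.sInf_le ⟨X, isAntisymTensor_of_isAntisymFun hφ (hfX ▸ hanti), hX0, rfl⟩
    _ ≤ p := cpRank_sum_prod_le c

theorem tpf_rank_ge_min_cpRank {Ω : Type*} {K N : ℕ} (hN : 1 ≤ N) (hKN : N ≤ K)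
    (φ : Fin K → Ω → ℂ) (hφ : LinearIndependent ℂ φ)
    (f : (Fin N → Ω) → ℂ) (hanti : IsAntisymFun f) (hf0 : f ≠ 0)
    {p : ℕ} (ψ : Fin p → Fin N → Ω → ℂ)
    (hspan : ∀ i j, ψ i j ∈ Submodule.span ℂ (Set.range φ))
    (hrep : ∀ r : Fin N → Ω, f r = ∑ i, ∏ j, ψ i j (r j)) :
    sInf {q : ℕ | ∃ Y : (Fin N → Fin K) → ℂ,
        IsAntisymTensor Y ∧ Y ≠ 0 ∧ cpRank Y = q} ≤ p :=
  tpf_rank_ge_min_cpRank_general φ hφ f hanti hf0 ψ hspan hrep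
end

section
/- Let K ≥ N ≥ 1 be natural numbers and let u : Fin N → Fin K be strictly increasing. Then the CP rank of the basis antisymmetric tensor E_u (an N-th order tensor of dimension K) equals the CP rank of the determinant tensor E (an N-th order tensor of dimension N). -/
open scoped BigOperators

/-!
Since `u` is injective, `E_u` restricted to the tuples with entries in the range of `u` is the
determinant tensor, and it vanishes on all other tuples. Restricting the factors of a CP
decomposition of `E_u` to the range of `u`, and extending those of a decomposition of `E` by zero
off the range of `u`, turns decompositions of either tensor into decompositions of the other with
the same number of terms.
-/

open Function

def HasCPDecomp {N K : ℕ} (X : (Fin N → Fin K) → ℂ) (p : ℕ) : Prop :=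
  ∃ x : Fin p → Fin N → Fin K → ℂ, ∀ k : Fin N → Fin K, X k = ∑ i, ∏ j, x i j (k j)

lemma cpRank_eq_sInf_hasCPDecomp {N K : ℕ} (X : (Fin N → Fin K) → ℂ) :
    cpRank X = sInf {p | HasCPDecomp X p} :=
  rfl

section Restriction

variable {N M K : ℕ} {X : (Fin N → Fin K) → ℂ} {e : Fin M → Fin K} {p : ℕ}

lemma HasCPDecomp.comp (h : HasCPDecomp X p) (e : Fin M → Fin K) :
    HasCPDecomp (fun k => X (e ∘ k)) p := by
  obtain ⟨x, hx⟩ := h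
  exact ⟨fun i j m => x i j (e m), fun k => hx (e ∘ k)⟩

lemma HasCPDecomp.of_comp (he : Injective e)
    (hX : ∀ k, (∃ j, k j ∉ Set.range e) → X k = 0)
    (h : HasCPDecomp (fun k => X (e ∘ k)) p) : HasCPDecomp X p := by
  obtain ⟨x, hx⟩ := h
  refine ⟨fun i j => extend e (x i j) 0, fun k => ?_⟩
  by_cases hk : ∀ j, k j ∈ Set.range e
  · choose m hm using hk
    obtain rfl : e ∘ m = k := funext hm
    simp only [hx m, comp_apply, he.extend_apply]
  · obtain ⟨j, hj⟩ := not_forall.mp hk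
    rw [hX k ⟨j, hj⟩, eq_comm]
    refine Finset.sum_eq_zero fun i _ => Finset.prod_eq_zero (Finset.mem_univ j) ?_
    exact extend_apply' _ _ _ hj

lemma cpRank_comp_eq_of_injective (he : Injective e)
    (hX : ∀ k, (∃ j, k j ∉ Set.range e) → X k = 0) :
    cpRank (fun k => X (e ∘ k)) = cpRank X := by
  simp only [cpRank_eq_sInf_hasCPDecomp]
  congr 1
  ext p
  exact ⟨HasCPDecomp.of_comp he hX, (HasCPDecomp.comp · e)⟩

end Restriction

lemma basisTensor_comp {N K : ℕ} {u : Fin N → Fin K} (hu : Injective u) (k : Fin N → Fin N) :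
    basisTensor u (u ∘ k) = detTensor N k := by
  refine Finset.sum_congr rfl fun π _ => ?_
  simp only [hu.comp_left.eq_iff]

lemma basisTensor_eq_zero_of_notMem_range {N K : ℕ} {u : Fin N → Fin K} {k : Fin N → Fin K}
    (hk : ∃ j, k j ∉ Set.range u) : basisTensor u k = 0 := by
  obtain ⟨j, hj⟩ := hk
  exact Finset.sum_eq_zero fun π _ => if_neg fun h => hj ⟨π j, (congrFun h j).symm⟩

theorem cpRank_basisTensor_eq_cpRank_detTensor_general {N K : ℕ}
    (u : Fin N → Fin K) (hu : StrictMono u) :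
    cpRank (basisTensor u) = cpRank (detTensor N) := by
  rw [← cpRank_comp_eq_of_injective hu.injective fun _ => basisTensor_eq_zero_of_notMem_range]
  exact congrArg cpRank (funext (basisTensor_comp hu.injective))

theorem cpRank_basisTensor_eq_cpRank_detTensor {N K : ℕ} (hN : 1 ≤ N) (hKN : N ≤ K)
    (u : Fin N → Fin K) (hu : StrictMono u) :
    cpRank (basisTensor u) = cpRank (detTensor N) :=
  cpRank_basisTensor_eq_cpRank_detTensor_general u hu
end

section
/- Let N ≥ 1 and let E be the determinant tensor, i.e., the N-th order tensor of dimension N over ℂ with E(ℓ) = sgn(ℓ) if ℓ is a permutation of Fin N and E(ℓ) = 0 otherwise. Then binom(N, ⌊N/2⌋) ≤ rank_cp(E) and rank_cp(E) ≤ N! · (5/6)^{⌊N/3⌋} (the latter inequality understood in the real numbers). -/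
open scoped BigOperators

lemma prod_ind_aux {N K : ℕ} (k f : Fin N → Fin K) :
    (∏ j, if k j = f j then (1:ℂ) else 0) = if k = f then 1 else 0 := by
  by_cases h : k = f
  · simp [h]
  · obtain ⟨j0, hj0⟩ := Function.ne_iff.mp h
    rw [if_neg h]
    exact Finset.prod_eq_zero (Finset.mem_univ j0) (if_neg hj0)

lemma cpRank_le_card {N K : ℕ} (X : (Fin N → Fin K) → ℂ) {ι : Type*} [Fintype ι]
    (x : ι → Fin N → Fin K → ℂ)
    (h : ∀ k : Fin N → Fin K, X k = ∑ i, ∏ j, x i j (k j)) :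
    cpRank X ≤ Fintype.card ι := by
  apply Nat.sInf_le
  refine ⟨fun i => x ((Fintype.equivFin ι).symm i), fun k => ?_⟩
  rw [h k]
  exact (Equiv.sum_comp (Fintype.equivFin ι).symm fun i => ∏ j, x i j (k j)).symm

lemma exists_cpRank_decomp {N K : ℕ} (hN : 1 ≤ N) (X : (Fin N → Fin K) → ℂ) :
    ∃ x : Fin (cpRank X) → Fin N → Fin K → ℂ,
      ∀ k : Fin N → Fin K, X k = ∑ i, ∏ j, x i j (k j) := by
  have hne : {p : ℕ | ∃ x : Fin p → Fin N → Fin K → ℂ,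
      ∀ k : Fin N → Fin K, X k = ∑ i, ∏ j, x i j (k j)}.Nonempty := by
    classical
    let e := Fintype.equivFin (Fin N → Fin K)
    refine ⟨Fintype.card (Fin N → Fin K),
      fun i j v => (if v = (e.symm i) j then 1 else 0) *
        (if j = ⟨0, hN⟩ then X (e.symm i) else 1), fun k => ?_⟩
    have : ∀ f : Fin N → Fin K,
        (∏ j, ((if k j = f j then (1:ℂ) else 0) * (if j = ⟨0, hN⟩ then X f else 1)))
          = (if k = f then 1 else 0) * X f := by
      intro f
      rw [Finset.prod_mul_distrib, prod_ind_aux]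
      congr 1
      simp
    calc X k = ∑ f : Fin N → Fin K, (if k = f then 1 else 0) * X f := by
            rw [Finset.sum_eq_single k] <;> simp +contextual [eq_comm]
      _ = ∑ f : Fin N → Fin K, ∏ j, ((if k j = f j then (1:ℂ) else 0) *
            (if j = ⟨0, hN⟩ then X f else 1)) := by
            exact Finset.sum_congr rfl fun f _ => (this f).symm
      _ = _ := (Equiv.sum_comp e.symm _).symm
  exact Nat.sInf_mem hne

lemma detTensor_not_inj {N : ℕ} (ℓ : Fin N → Fin N) (h : ¬ Function.Injective ℓ) :
    detTensor N ℓ = 0 := by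
  unfold detTensor
  refine Finset.sum_eq_zero fun π _ => if_neg fun hh => h ?_
  rw [hh]; exact π.injective

lemma detTensor_coe {N : ℕ} (π : Equiv.Perm (Fin N)) :
    detTensor N ⇑π = ((Equiv.Perm.sign π : ℤ) : ℂ) := by
  unfold detTensor
  rw [Finset.sum_eq_single π]
  · simp
  · intro b _ hb
    refine if_neg fun hh => hb (Equiv.coe_fn_injective hh.symm)
  · simp

lemma detTensor_eq_det {N : ℕ} (ℓ : Fin N → Fin N) :
    detTensor N ℓ = Matrix.det (Matrix.of fun i j => if ℓ j = i then (1:ℂ) else 0) := by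
  rw [Matrix.det_apply']
  unfold detTensor
  refine Finset.sum_congr rfl fun σ _ => ?_
  have : (∏ i, (Matrix.of fun i j => if ℓ j = i then (1:ℂ) else 0) (σ i) i)
      = if ℓ = ⇑σ then 1 else 0 := by
    rw [← prod_ind_aux ℓ ⇑σ]
    exact Finset.prod_congr rfl fun i _ => by simp [Matrix.of_apply]
  rw [this]
  by_cases h : ℓ = ⇑σ <;> simp [h]

lemma detTensor_bij {N : ℕ} (ℓ : Fin N → Fin N) (h : Function.Bijective ℓ) :
    detTensor N ℓ ≠ 0 := by
  have : ℓ = ⇑(Equiv.ofBijective ℓ h) := rfl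
  rw [this, detTensor_coe]
  rcases Int.units_eq_one_or (Equiv.Perm.sign (Equiv.ofBijective ℓ h)) with h'|h' <;>
    simp [h']

lemma lower_bound {N : ℕ} (hN : 1 ≤ N) :
    N.choose (N / 2) ≤ cpRank (detTensor N) := by
  classical
  set m := N / 2 with hm
  have hmN : m ≤ N := Nat.div_le_self _ _
  set p := cpRank (detTensor N) with hp
  obtain ⟨x, hx⟩ := exists_cpRank_decomp hN (detTensor N)
  let e : (Fin m ⊕ Fin (N - m)) ≃ Fin N :=
    finSumFinEquiv.trans (finCongr (Nat.add_sub_cancel' hmN))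
  let I := {S : Finset (Fin N) // S.card = m}
  have hcardc : ∀ S : I, (S.1ᶜ).card = N - m := by
    intro S; rw [Finset.card_compl, S.2, Fintype.card_fin]
  let k : I → I → Fin N → Fin N := fun S T j =>
    Sum.elim (⇑(S.1.orderEmbOfFin S.2)) (⇑((T.1ᶜ).orderEmbOfFin (hcardc T))) (e.symm j)
  have hkl : ∀ S T j, k S T (e (Sum.inl j)) = S.1.orderEmbOfFin S.2 j := by
    intro S T j; simp [k]
  have hkr : ∀ S T j, k S T (e (Sum.inr j)) = (T.1ᶜ).orderEmbOfFin (hcardc T) j := by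
    intro S T j; simp [k]
  let A : Matrix I (Fin p) ℂ := fun S i => ∏ j, x i (e (Sum.inl j)) (S.1.orderEmbOfFin S.2 j)
  let B : Matrix (Fin p) I ℂ := fun i T => ∏ j, x i (e (Sum.inr j)) ((T.1ᶜ).orderEmbOfFin (hcardc T) j)
  let M : Matrix I I ℂ := fun S T => detTensor N (k S T)
  have hMAB : M = A * B := by
    funext S T
    show detTensor N (k S T) = ∑ i, A S i * B i T
    rw [hx]
    refine Finset.sum_congr rfl fun i _ => ?_
    have : (∏ j, x i j (k S T j)) = ∏ s : Fin m ⊕ Fin (N - m), x i (e s) (k S T (e s)) :=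
      (Equiv.prod_comp e fun j => x i j (k S T j)).symm
    rw [this, Fintype.prod_sum_type]
    congr 1
    · exact Finset.prod_congr rfl fun j _ => by rw [hkl]
    · exact Finset.prod_congr rfl fun j _ => by rw [hkr]
  -- M is diagonal with nonzero entries
  have hdiag : ∀ S T : I, S ≠ T → M S T = 0 := by
    intro S T hST
    apply detTensor_not_inj
    have : ¬ S.1 ⊆ T.1 := by
      intro hsub
      exact hST (Subtype.ext (Finset.eq_of_subset_of_card_le hsub (by rw [S.2, T.2])))
    obtain ⟨v, hvS, hvT⟩ := Finset.not_subset.mp this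
    have hvS' : v ∈ Set.range ⇑(S.1.orderEmbOfFin S.2) := by
      rw [Finset.range_orderEmbOfFin]; exact hvS
    have hvT' : v ∈ Set.range ⇑((T.1ᶜ).orderEmbOfFin (hcardc T)) := by
      rw [Finset.range_orderEmbOfFin]; simpa using hvT
    obtain ⟨j1, hj1⟩ := hvS'
    obtain ⟨j2, hj2⟩ := hvT'
    intro hinj
    have h1 : k S T (e (Sum.inl j1)) = v := by rw [hkl, hj1]
    have h2 : k S T (e (Sum.inr j2)) = v := by rw [hkr, hj2]
    have := hinj (h1.trans h2.symm)
    exact absurd (e.injective this) (by simp)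
  have hdiag2 : ∀ S : I, M S S ≠ 0 := by
    intro S
    apply detTensor_bij
    rw [Fintype.bijective_iff_injective_and_card]
    refine ⟨?_, rfl⟩
    intro a b hab
    obtain ⟨s, rfl⟩ : ∃ s, a = e s := ⟨e.symm a, (e.apply_symm_apply a).symm⟩
    obtain ⟨t, rfl⟩ : ∃ t, b = e t := ⟨e.symm b, (e.apply_symm_apply b).symm⟩
    congr 1
    cases s with
    | inl j1 => cases t with
      | inl j2 =>
        rw [hkl, hkl] at hab
        exact congrArg Sum.inl ((S.1.orderEmbOfFin S.2).injective hab)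
      | inr j2 =>
        rw [hkl, hkr] at hab
        have h1 := Finset.orderEmbOfFin_mem S.1 S.2 j1
        have h2 := Finset.orderEmbOfFin_mem (S.1ᶜ) (hcardc S) j2
        rw [hab] at h1
        rw [Finset.mem_compl] at h2
        exact absurd h1 h2
    | inr j1 => cases t with
      | inl j2 =>
        rw [hkr, hkl] at hab
        have h1 := Finset.orderEmbOfFin_mem S.1 S.2 j2
        have h2 := Finset.orderEmbOfFin_mem (S.1ᶜ) (hcardc S) j1
        rw [← hab] at h1
        rw [Finset.mem_compl] at h2
        exact absurd h1 h2
      | inr j2 =>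
        rw [hkr, hkr] at hab
        exact congrArg Sum.inr (((S.1ᶜ).orderEmbOfFin (hcardc S)).injective hab)
  have hMdiag : M = Matrix.diagonal (fun S => M S S) := by
    funext S T
    by_cases h : S = T
    · subst h; simp [Matrix.diagonal]
    · rw [hdiag S T h]; simp [Matrix.diagonal, h]
  have hunit : IsUnit M := by
    rw [Matrix.isUnit_iff_isUnit_det, hMdiag, Matrix.det_diagonal]
    rw [isUnit_iff_ne_zero]
    exact Finset.prod_ne_zero_iff.mpr fun S _ => hdiag2 S
  have hrank : M.rank = Fintype.card I := Matrix.rank_of_isUnit M hunit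
  have hrank2 : M.rank ≤ p := by
    rw [hMAB]
    calc (A * B).rank ≤ B.rank := Matrix.rank_mul_le_right A B
      _ ≤ Fintype.card (Fin p) := Matrix.rank_le_card_height B
      _ = p := Fintype.card_fin p
  have hcardI : Fintype.card I = N.choose m := by
    rw [Fintype.card_finset_len, Fintype.card_fin]
  omega

noncomputable def y3 : Fin 5 → Fin 3 → Fin 3 → ℂ :=
  ![![![0,1,0], ![0,0,1], ![1,-1,0]],
    ![![-1,0,1], ![1,-1,0], ![0,0,1]],
    ![![0,0,-1], ![0,1,0], ![1,0,-1]],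
    ![![1,-1,0], ![1,0,-1], ![0,1,0]],
    ![![-1,1,1], ![1,0,0], ![0,1,-1]]]

set_option maxHeartbeats 2000000 in
lemma det3_decomp : ∀ k : Fin 3 → Fin 3,
    detTensor 3 k = ∑ i : Fin 5, ∏ j : Fin 3, y3 i j (k j) := by
  have h : ∀ a b c : Fin 3, detTensor 3 ![a,b,c] = ∑ i : Fin 5, ∏ j : Fin 3, y3 i j (![a,b,c] j) := by
    intro a b c
    rw [detTensor_eq_det]
    fin_cases a <;> fin_cases b <;> fin_cases c <;>
      simp [Matrix.det_fin_three, Fin.sum_univ_five, Fin.prod_univ_three, y3, Matrix.vecHead, Matrix.vecTail] <;> norm_num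
  intro k
  have hk : k = ![k 0, k 1, k 2] := by
    funext j; fin_cases j <;> rfl
  rw [hk]; exact h _ _ _

lemma det1_decomp : ∀ k : Fin 1 → Fin 1,
    detTensor 1 k = ∑ i : Fin 1, ∏ j : Fin 1, (fun _ _ _ => (1:ℂ)) i j (k j) := by
  intro k
  have hk : k = ⇑(1 : Equiv.Perm (Fin 1)) := by funext j; exact Subsingleton.elim _ _
  rw [hk]
  unfold detTensor
  rw [Finset.sum_eq_single (1 : Equiv.Perm (Fin 1))]
  · simp
  · intro b _ hb; exact absurd (Subsingleton.elim _ _) hb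
  · simp

noncomputable def y2 : Fin 2 → Fin 2 → Fin 2 → ℂ :=
  ![![![1,0], ![0,1]], ![![0,-1], ![1,0]]]

lemma det2_decomp : ∀ k : Fin 2 → Fin 2,
    detTensor 2 k = ∑ i : Fin 2, ∏ j : Fin 2, y2 i j (k j) := by
  have h : ∀ a b : Fin 2, detTensor 2 ![a,b] = ∑ i : Fin 2, ∏ j : Fin 2, y2 i j (![a,b] j) := by
    intro a b
    rw [detTensor_eq_det]
    fin_cases a <;> fin_cases b <;>
      simp [Matrix.det_fin_two, Fin.sum_univ_two, Fin.prod_univ_two, y2, Matrix.vecHead, Matrix.vecTail] <;> norm_num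
  intro k
  have hk : k = ![k 0, k 1] := by funext j; fin_cases j <;> rfl
  rw [hk]; exact h _ _

abbrev I3 (n : ℕ) := {S : Finset (Fin (n+3)) // S.card = 3}

lemma card_compl3 {n : ℕ} (S : I3 n) : (S.1ᶜ).card = n := by
  rw [Finset.card_compl, S.2, Fintype.card_fin]
  omega

noncomputable def rho {n : ℕ} (S : I3 n) : (Fin n ⊕ Fin 3) ≃ Fin (n+3) :=
  Equiv.ofBijective
    (Sum.elim (⇑((S.1ᶜ).orderEmbOfFin (card_compl3 S))) (⇑(S.1.orderEmbOfFin S.2))) (by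
    rw [Fintype.bijective_iff_injective_and_card]
    refine ⟨?_, by simp⟩
    intro a b hab
    cases a with
    | inl j1 => cases b with
      | inl j2 =>
        exact congrArg Sum.inl (((S.1ᶜ).orderEmbOfFin (card_compl3 S)).injective hab)
      | inr j2 =>
        have h1 := Finset.orderEmbOfFin_mem (S.1ᶜ) (card_compl3 S) j1
        have h2 := Finset.orderEmbOfFin_mem S.1 S.2 j2
        rw [Finset.mem_compl] at h1
        exact absurd (show Sum.elim _ _ (Sum.inl j1) ∈ S.1 by rw [hab]; exact h2) h1
    | inr j1 => cases b with
      | inl j2 =>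
        have h1 := Finset.orderEmbOfFin_mem (S.1ᶜ) (card_compl3 S) j2
        have h2 := Finset.orderEmbOfFin_mem S.1 S.2 j1
        rw [Finset.mem_compl] at h1
        exact absurd (show Sum.elim _ _ (Sum.inl j2) ∈ S.1 by rw [← hab]; exact h2) h1
      | inr j2 =>
        exact congrArg Sum.inr ((S.1.orderEmbOfFin S.2).injective hab))

noncomputable def Phi (n : ℕ) (x : I3 n × Equiv.Perm (Fin 3) × Equiv.Perm (Fin n)) :
    Equiv.Perm (Fin (n+3)) :=
  finSumFinEquiv.symm.trans ((Equiv.sumCongr x.2.2 x.2.1).trans (rho x.1))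

lemma Phi_castAdd {n : ℕ} (S : I3 n) (σ : Equiv.Perm (Fin 3)) (τ : Equiv.Perm (Fin n))
    (j : Fin n) :
    Phi n (S,σ,τ) (Fin.castAdd 3 j) = (S.1ᶜ).orderEmbOfFin (card_compl3 S) (τ j) := by
  show rho S (Equiv.sumCongr τ σ (finSumFinEquiv.symm (Fin.castAdd 3 j))) = _
  rw [← finSumFinEquiv_apply_left, Equiv.symm_apply_apply]
  simp [rho, Equiv.ofBijective]

lemma Phi_natAdd {n : ℕ} (S : I3 n) (σ : Equiv.Perm (Fin 3)) (τ : Equiv.Perm (Fin n))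
    (j : Fin 3) :
    Phi n (S,σ,τ) (Fin.natAdd n j) = S.1.orderEmbOfFin S.2 (σ j) := by
  show rho S (Equiv.sumCongr τ σ (finSumFinEquiv.symm (Fin.natAdd n j))) = _
  rw [← finSumFinEquiv_apply_right, Equiv.symm_apply_apply]
  simp [rho, Equiv.ofBijective]

lemma sign_Phi {n : ℕ} (S : I3 n) (σ : Equiv.Perm (Fin 3)) (τ : Equiv.Perm (Fin n)) :
    Equiv.Perm.sign (Phi n (S,σ,τ))
      = Equiv.Perm.sign (Phi n (S,1,1)) * Equiv.Perm.sign σ * Equiv.Perm.sign τ := by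
  have hdec : Phi n (S,σ,τ)
      = (Equiv.permCongr finSumFinEquiv (Equiv.sumCongr τ σ)).trans (Phi n (S,1,1)) := by
    ext x
    simp [Phi, Equiv.permCongr, Equiv.permCongr_apply]
  have h2 : (Equiv.permCongr finSumFinEquiv (Equiv.sumCongr τ σ)).trans (Phi n (S,1,1))
      = Phi n (S,1,1) * (Equiv.permCongr finSumFinEquiv (Equiv.sumCongr τ σ)) := rfl
  rw [hdec, h2, Equiv.Perm.sign_mul, Equiv.Perm.sign_permCongr, Equiv.Perm.sign_sumCongr,
    mul_assoc, mul_comm (Equiv.Perm.sign σ) (Equiv.Perm.sign τ)]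

lemma image_orderEmb_perm {K c : ℕ} (S : Finset (Fin K)) (hS : S.card = c)
    (σ : Equiv.Perm (Fin c)) :
    Finset.image (fun j => S.orderEmbOfFin hS (σ j)) Finset.univ = S := by
  have h1 : Finset.image (fun j => S.orderEmbOfFin hS (σ j)) Finset.univ ⊆ S := by
    intro v hv
    obtain ⟨j, _, rfl⟩ := Finset.mem_image.mp hv
    exact Finset.orderEmbOfFin_mem S hS (σ j)
  have h2 : (Finset.image (fun j => S.orderEmbOfFin hS (σ j)) Finset.univ).card = c := by
    rw [Finset.card_image_of_injective _
      (fun a b hab => σ.injective ((S.orderEmbOfFin hS).injective hab)), Finset.card_univ,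
      Fintype.card_fin]
  exact Finset.eq_of_subset_of_card_le h1 (by rw [h2, hS])

lemma Phi_bijective (n : ℕ) : Function.Bijective (Phi n) := by
  rw [Fintype.bijective_iff_injective_and_card]
  constructor
  · rintro ⟨S, σ, τ⟩ ⟨S', σ', τ'⟩ h
    have hnat : ∀ j, S.1.orderEmbOfFin S.2 (σ j) = S'.1.orderEmbOfFin S'.2 (σ' j) := by
      intro j
      rw [← Phi_natAdd S σ τ j, ← Phi_natAdd S' σ' τ' j, h]
    have hSS : S = S' := by
      apply Subtype.ext
      rw [← image_orderEmb_perm S.1 S.2 σ, ← image_orderEmb_perm S'.1 S'.2 σ']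
      exact Finset.image_congr fun j _ => hnat j
    subst hSS
    have hσ : σ = σ' := by
      apply Equiv.ext
      intro j
      exact (S.1.orderEmbOfFin S.2).injective (hnat j)
    have hτ : τ = τ' := by
      apply Equiv.ext
      intro j
      have hthis := congrArg (fun p : Equiv.Perm (Fin (n+3)) => p (Fin.castAdd 3 j)) h
      rw [Phi_castAdd, Phi_castAdd] at hthis
      exact ((S.1ᶜ).orderEmbOfFin (card_compl3 S)).injective hthis
    rw [hσ, hτ]
  · have h6 : Fintype.card (Equiv.Perm (Fin 3)) = 6 := by
      rw [Fintype.card_perm, Fintype.card_fin]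
      decide
    have := Nat.choose_mul_factorial_mul_factorial (show 3 ≤ n + 3 by omega)
    rw [Nat.add_sub_cancel] at this
    simp only [Fintype.card_prod, Fintype.card_perm, Fintype.card_fin,
      Fintype.card_finset_len, Fintype.card_fin]
    calc (n+3).choose 3 * (Nat.factorial 3 * n.factorial)
        = (n+3).choose 3 * Nat.factorial 3 * n.factorial := by ring
      _ = (n+3).factorial := this

lemma laplace {n : ℕ} (ℓ : Fin (n+3) → Fin (n+3)) :
    detTensor (n+3) ℓ =
    ∑ S : I3 n,
      ((Equiv.Perm.sign (Phi n (S,1,1)) : ℤ) : ℂ) *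
      ((∑ σ : Equiv.Perm (Fin 3),
          if (fun j => ℓ (Fin.natAdd n j)) = ⇑(S.1.orderEmbOfFin S.2) ∘ ⇑σ
          then ((Equiv.Perm.sign σ : ℤ):ℂ) else 0) *
       (∑ τ : Equiv.Perm (Fin n),
          if (fun j => ℓ (Fin.castAdd 3 j)) = ⇑((S.1ᶜ).orderEmbOfFin (card_compl3 S)) ∘ ⇑τ
          then ((Equiv.Perm.sign τ : ℤ):ℂ) else 0)) := by
  have key : ∀ (S : I3 n) (σ : Equiv.Perm (Fin 3)) (τ : Equiv.Perm (Fin n)),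
      (ℓ = ⇑(Phi n (S,σ,τ))) ↔
      ((fun j => ℓ (Fin.natAdd n j)) = ⇑(S.1.orderEmbOfFin S.2) ∘ ⇑σ ∧
       (fun j => ℓ (Fin.castAdd 3 j)) = ⇑((S.1ᶜ).orderEmbOfFin (card_compl3 S)) ∘ ⇑τ) := by
    intro S σ τ
    constructor
    · intro h
      constructor
      · funext j; rw [h]; exact Phi_natAdd S σ τ j
      · funext j; rw [h]; exact Phi_castAdd S σ τ j
    · rintro ⟨h1, h2⟩
      funext v
      obtain ⟨s, rfl⟩ : ∃ s, v = finSumFinEquiv s :=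
        ⟨finSumFinEquiv.symm v, (finSumFinEquiv.apply_symm_apply v).symm⟩
      cases s with
      | inl j =>
        rw [finSumFinEquiv_apply_left]
        rw [Phi_castAdd S σ τ j]
        exact congrFun h2 j
      | inr j =>
        rw [finSumFinEquiv_apply_right]
        rw [Phi_natAdd S σ τ j]
        exact congrFun h1 j
  have step1 : detTensor (n+3) ℓ
      = ∑ x : I3 n × Equiv.Perm (Fin 3) × Equiv.Perm (Fin n),
          (if ℓ = ⇑(Phi n x) then ((Equiv.Perm.sign (Phi n x) : ℤ):ℂ) else 0) :=
    (Fintype.sum_bijective (Phi n) (Phi_bijective n)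
      (fun x => if ℓ = ⇑(Phi n x) then ((Equiv.Perm.sign (Phi n x) : ℤ):ℂ) else 0)
      (fun π => if ℓ = ⇑π then ((Equiv.Perm.sign π : ℤ):ℂ) else 0)
      (fun x => rfl)).symm
  rw [step1, Fintype.sum_prod_type]
  refine Finset.sum_congr rfl fun S _ => ?_
  rw [Finset.sum_mul_sum, Finset.mul_sum, Fintype.sum_prod_type]
  refine Finset.sum_congr rfl fun σ _ => ?_
  rw [Finset.mul_sum]
  refine Finset.sum_congr rfl fun τ _ => ?_
  by_cases h1 : (fun j => ℓ (Fin.natAdd n j)) = ⇑(S.1.orderEmbOfFin S.2) ∘ ⇑σ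
  · by_cases h2 : (fun j => ℓ (Fin.castAdd 3 j)) = ⇑((S.1ᶜ).orderEmbOfFin (card_compl3 S)) ∘ ⇑τ
    · rw [if_pos ((key S σ τ).mpr ⟨h1, h2⟩), if_pos h1, if_pos h2, sign_Phi]
      push_cast
      ring
    · rw [if_neg (fun h => h2 ((key S σ τ).mp h).2), if_neg h2]
      ring
  · rw [if_neg (fun h => h1 ((key S σ τ).mp h).1), if_neg h1]
    ring

lemma push_decomp {c K p : ℕ} (S : Finset (Fin K)) (hS : S.card = c)
    (x : Fin p → Fin c → Fin c → ℂ)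
    (hx : ∀ k : Fin c → Fin c, detTensor c k = ∑ i, ∏ j, x i j (k j))
    (a : Fin c → Fin K) :
    (∑ τ : Equiv.Perm (Fin c),
        if a = ⇑(S.orderEmbOfFin hS) ∘ ⇑τ then ((Equiv.Perm.sign τ : ℤ):ℂ) else 0)
      = ∑ i, ∏ j, (if h : a j ∈ S then x i j ((S.orderIsoOfFin hS).symm ⟨a j, h⟩) else 0) := by
  by_cases hmem : ∀ j, a j ∈ S
  · set cf : Fin c → Fin c := fun j => (S.orderIsoOfFin hS).symm ⟨a j, hmem j⟩ with hcf
    have hac : ∀ j, a j = S.orderEmbOfFin hS (cf j) := by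
      intro j
      rw [← Finset.coe_orderIsoOfFin_apply]
      simp [cf]
    have hRHS : ∀ i : Fin p,
        (∏ j, if h : a j ∈ S then x i j ((S.orderIsoOfFin hS).symm ⟨a j, h⟩) else 0)
          = ∏ j, x i j (cf j) :=
      fun i => Finset.prod_congr rfl fun j _ => dif_pos (hmem j)
    rw [Finset.sum_congr rfl fun i _ => hRHS i, ← hx cf]
    unfold detTensor
    refine Finset.sum_congr rfl fun τ _ => ?_
    refine if_congr ?_ rfl rfl
    constructor
    · intro h
      funext j
      have h1 := congrFun h j
      simp only [Function.comp] at h1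
      rw [hac j] at h1
      exact (S.orderEmbOfFin hS).injective h1
    · intro h
      funext j
      rw [hac j, h]
      rfl
  · push_neg at hmem
    obtain ⟨j0, hj0⟩ := hmem
    trans (0:ℂ)
    · refine Finset.sum_eq_zero fun τ _ => if_neg fun h => hj0 ?_
      have := congrFun h j0
      simp only [Function.comp] at this
      rw [this]
      exact Finset.orderEmbOfFin_mem S hS (τ j0)
    · exact (Finset.sum_eq_zero fun i _ =>
        Finset.prod_eq_zero (Finset.mem_univ j0) (dif_neg hj0)).symm

lemma fse_symm_castAdd {n : ℕ} (j : Fin n) :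
    finSumFinEquiv.symm (Fin.castAdd 3 j) = Sum.inl j := by
  rw [← finSumFinEquiv_apply_left, Equiv.symm_apply_apply]

lemma fse_symm_natAdd {n : ℕ} (j : Fin 3) :
    finSumFinEquiv.symm (Fin.natAdd n j) = Sum.inr j := by
  rw [← finSumFinEquiv_apply_right, Equiv.symm_apply_apply]

set_option maxHeartbeats 1600000 in
lemma step_bound {n p : ℕ} (x : Fin p → Fin n → Fin n → ℂ)
    (hx : ∀ k : Fin n → Fin n, detTensor n k = ∑ i, ∏ j, x i j (k j)) :
    cpRank (detTensor (n+3)) ≤ (n+3).choose 3 * (5 * p) := by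
  classical
  let z : (I3 n × Fin 5 × Fin p) → Fin (n+3) → Fin (n+3) → ℂ := fun w j v =>
    Sum.elim
      (fun j' : Fin n => if h : v ∈ (w.1.1ᶜ) then
        x w.2.2 j' (((w.1.1ᶜ).orderIsoOfFin (card_compl3 w.1)).symm ⟨v, h⟩) else 0)
      (fun j' : Fin 3 => (if j' = 0 then ((Equiv.Perm.sign (Phi n (w.1,1,1)) : ℤ):ℂ) else 1) *
        (if h : v ∈ w.1.1 then y3 w.2.1 j' ((w.1.1.orderIsoOfFin w.1.2).symm ⟨v, h⟩) else 0))
      (finSumFinEquiv.symm j)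
  have hcard : Fintype.card (I3 n × Fin 5 × Fin p) = (n+3).choose 3 * (5 * p) := by
    simp [Fintype.card_finset_len]
  rw [← hcard]
  apply cpRank_le_card _ z
  intro k
  rw [laplace k, Fintype.sum_prod_type]
  refine Finset.sum_congr rfl fun S _ => Eq.symm ?_
  have hprod : ∀ (a : Fin 5) (b : Fin p),
      (∏ j, z (S,a,b) j (k j)) =
      (∏ j' : Fin n, (if h : k (Fin.castAdd 3 j') ∈ (S.1ᶜ) then
          x b j' (((S.1ᶜ).orderIsoOfFin (card_compl3 S)).symm ⟨k (Fin.castAdd 3 j'), h⟩) else 0)) *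
      (((Equiv.Perm.sign (Phi n (S,1,1)) : ℤ):ℂ) *
       (∏ j' : Fin 3, (if h : k (Fin.natAdd n j') ∈ S.1 then
          y3 a j' ((S.1.orderIsoOfFin S.2).symm ⟨k (Fin.natAdd n j'), h⟩) else 0))) := by
    intro a b
    rw [← Equiv.prod_comp finSumFinEquiv (fun j => z (S,a,b) j (k j)), Fintype.prod_sum_type]
    congr 1
    · refine Finset.prod_congr rfl fun j' _ => ?_
      show z (S,a,b) (finSumFinEquiv (Sum.inl j')) (k (finSumFinEquiv (Sum.inl j'))) = _
      rw [finSumFinEquiv_apply_left]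
      show Sum.elim _ _ (finSumFinEquiv.symm (Fin.castAdd 3 j')) = _
      rw [fse_symm_castAdd]
      rfl
    · have hsplit : (∏ j' : Fin 3,
          z (S,a,b) (finSumFinEquiv (Sum.inr j')) (k (finSumFinEquiv (Sum.inr j')))) =
          ∏ j' : Fin 3, ((if j' = 0 then ((Equiv.Perm.sign (Phi n (S,1,1)) : ℤ):ℂ) else 1) *
            (if h : k (Fin.natAdd n j') ∈ S.1 then
              y3 a j' ((S.1.orderIsoOfFin S.2).symm ⟨k (Fin.natAdd n j'), h⟩) else 0)) := by
        refine Finset.prod_congr rfl fun j' _ => ?_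
        show z (S,a,b) (finSumFinEquiv (Sum.inr j')) (k (finSumFinEquiv (Sum.inr j'))) = _
        rw [finSumFinEquiv_apply_right]
        show Sum.elim _ _ (finSumFinEquiv.symm (Fin.natAdd n j')) = _
        rw [fse_symm_natAdd]
        rfl
      rw [hsplit, Finset.prod_mul_distrib]
      congr 1
      simp
  calc (∑ y : Fin 5 × Fin p, ∏ j, z (S, y) j (k j))
      = ∑ a : Fin 5, ∑ b : Fin p, ∏ j, z (S,a,b) j (k j) := by rw [Fintype.sum_prod_type]
    _ = ∑ a : Fin 5, ∑ b : Fin p,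
        (∏ j' : Fin n, (if h : k (Fin.castAdd 3 j') ∈ (S.1ᶜ) then
          x b j' (((S.1ᶜ).orderIsoOfFin (card_compl3 S)).symm ⟨k (Fin.castAdd 3 j'), h⟩) else 0)) *
        (((Equiv.Perm.sign (Phi n (S,1,1)) : ℤ):ℂ) *
         (∏ j' : Fin 3, (if h : k (Fin.natAdd n j') ∈ S.1 then
          y3 a j' ((S.1.orderIsoOfFin S.2).symm ⟨k (Fin.natAdd n j'), h⟩) else 0))) :=
        Finset.sum_congr rfl fun a _ => Finset.sum_congr rfl fun b _ => hprod a b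
    _ = ∑ a : Fin 5,
        (∑ b : Fin p, ∏ j' : Fin n, (if h : k (Fin.castAdd 3 j') ∈ (S.1ᶜ) then
          x b j' (((S.1ᶜ).orderIsoOfFin (card_compl3 S)).symm ⟨k (Fin.castAdd 3 j'), h⟩) else 0)) *
        (((Equiv.Perm.sign (Phi n (S,1,1)) : ℤ):ℂ) *
         (∏ j' : Fin 3, (if h : k (Fin.natAdd n j') ∈ S.1 then
          y3 a j' ((S.1.orderIsoOfFin S.2).symm ⟨k (Fin.natAdd n j'), h⟩) else 0))) :=
        Finset.sum_congr rfl fun a _ => (Finset.sum_mul _ _ _).symm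
    _ = (∑ b : Fin p, ∏ j' : Fin n, (if h : k (Fin.castAdd 3 j') ∈ (S.1ᶜ) then
          x b j' (((S.1ᶜ).orderIsoOfFin (card_compl3 S)).symm ⟨k (Fin.castAdd 3 j'), h⟩) else 0)) *
        (((Equiv.Perm.sign (Phi n (S,1,1)) : ℤ):ℂ) *
         (∑ a : Fin 5, ∏ j' : Fin 3, (if h : k (Fin.natAdd n j') ∈ S.1 then
          y3 a j' ((S.1.orderIsoOfFin S.2).symm ⟨k (Fin.natAdd n j'), h⟩) else 0))) := by
        rw [← Finset.mul_sum]
        congr 1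
        rw [← Finset.mul_sum]
    _ = ((Equiv.Perm.sign (Phi n (S,1,1)) : ℤ):ℂ) *
        ((∑ σ : Equiv.Perm (Fin 3),
          if (fun j => k (Fin.natAdd n j)) = ⇑(S.1.orderEmbOfFin S.2) ∘ ⇑σ
          then ((Equiv.Perm.sign σ : ℤ):ℂ) else 0) *
         (∑ τ : Equiv.Perm (Fin n),
          if (fun j => k (Fin.castAdd 3 j)) = ⇑((S.1ᶜ).orderEmbOfFin (card_compl3 S)) ∘ ⇑τ
          then ((Equiv.Perm.sign τ : ℤ):ℂ) else 0)) := by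
        rw [push_decomp S.1 S.2 y3 det3_decomp (fun j => k (Fin.natAdd n j)),
          push_decomp (S.1ᶜ) (card_compl3 S) x hx (fun j => k (Fin.castAdd 3 j))]
        ring

noncomputable def cseq : ℕ → ℕ
  | 0 => 1
  | 1 => 1
  | 2 => 2
  | 3 => 5
  | (n+4) => (n+4).choose 3 * (5 * cseq (n+1))

lemma cp_le_cseq : ∀ n, 1 ≤ n → cpRank (detTensor n) ≤ cseq n := by
  intro n
  induction n using Nat.strong_induction_on with
  | _ n ih =>
    match n with
    | 0 => intro h; omega
    | 1 => intro _
           have h := cpRank_le_card (detTensor 1) (fun _ _ _ => (1:ℂ)) det1_decomp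
           simpa [cseq] using h
    | 2 => intro _
           have h := cpRank_le_card (detTensor 2) _ det2_decomp
           simpa [cseq] using h
    | 3 => intro _
           have h := cpRank_le_card (detTensor 3) _ det3_decomp
           simpa [cseq] using h
    | (m+4) =>
      intro _
      obtain ⟨x, hx⟩ := exists_cpRank_decomp (show 1 ≤ m+1 by omega) (detTensor (m+1))
      have h1 : cpRank (detTensor (m+4)) ≤ (m+4).choose 3 * (5 * cpRank (detTensor (m+1))) :=
        step_bound x hx
      have h2 : cpRank (detTensor (m+1)) ≤ cseq (m+1) := ih (m+1) (by omega) (by omega)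
      calc cpRank (detTensor (m+4)) ≤ (m+4).choose 3 * (5 * cpRank (detTensor (m+1))) := h1
        _ ≤ (m+4).choose 3 * (5 * cseq (m+1)) :=
            Nat.mul_le_mul_left _ (Nat.mul_le_mul_left _ h2)
        _ = cseq (m+4) := by simp [cseq]

lemma cseq_le_real : ∀ n, 1 ≤ n → (cseq n : ℝ) ≤ (n.factorial : ℝ) * (5/6:ℝ)^(n/3) := by
  intro n
  induction n using Nat.strong_induction_on with
  | _ n ih =>
    match n with
    | 0 => intro h; omega
    | 1 => intro _; norm_num [cseq, Nat.factorial]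
    | 2 => intro _; norm_num [cseq, Nat.factorial]
    | 3 => intro _; norm_num [cseq, Nat.factorial]
    | (m+4) =>
      intro _
      have hIH : (cseq (m+1) : ℝ) ≤ ((m+1).factorial : ℝ) * (5/6:ℝ)^((m+1)/3) :=
        ih (m+1) (by omega) (by omega)
      have hdiv : (m+4)/3 = (m+1)/3 + 1 := by omega
      have hfacN : (m+4).choose 3 * 6 * (m+1).factorial = (m+4).factorial := by
        have h := Nat.choose_mul_factorial_mul_factorial (show 3 ≤ m+4 by omega)
        have h3 : m + 4 - 3 = m + 1 := by omega
        rw [h3] at h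
        simpa [Nat.factorial] using h
      have hfac : ((m+4).choose 3 : ℝ) * 6 * ((m+1).factorial : ℝ) = ((m+4).factorial : ℝ) := by
        exact_mod_cast congrArg (fun t : ℕ => (t:ℝ)) hfacN
      have hcs : cseq (m+4) = (m+4).choose 3 * (5 * cseq (m+1)) := by simp [cseq]
      rw [hcs, hdiv, pow_succ]
      push_cast
      set r := (5/6:ℝ)^((m+1)/3) with hr
      have hr0 : 0 ≤ r := by positivity
      have hC0 : (0:ℝ) ≤ ((m+4).choose 3 : ℝ) := by positivity
      nlinarith [mul_le_mul_of_nonneg_left hIH (by positivity : (0:ℝ) ≤ 5 * ((m+4).choose 3:ℝ))]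


theorem cpRank_detTensor_bounds {N : ℕ} (hN : 1 ≤ N) :
    N.choose (N / 2) ≤ cpRank (detTensor N) ∧
    (cpRank (detTensor N) : ℝ) ≤ (N.factorial : ℝ) * (5 / 6 : ℝ) ^ (N / 3) := by
  refine ⟨lower_bound hN, ?_⟩
  have h1 := cp_le_cseq N hN
  have h2 := cseq_le_real N hN
  calc (cpRank (detTensor N) : ℝ) ≤ (cseq N : ℝ) := by exact_mod_cast h1
    _ ≤ _ := h2
end

section
/- Let K ≥ N ≥ 1 be natural numbers and let X be a nonzero antisymmetric N-th order tensor of dimension K over ℂ. Then rank_cp(X) ≥ binom(N, ⌊N/2⌋). -/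
open scoped BigOperators

lemma myRankAddLe {m n : Type*} [Fintype m] [Fintype n] (A B : Matrix m n ℂ) :
    (A + B).rank ≤ A.rank + B.rank := by
  classical
  simp only [Matrix.rank]
  have h : LinearMap.range (A + B).mulVecLin ≤
      LinearMap.range A.mulVecLin ⊔ LinearMap.range B.mulVecLin := by
    rw [Matrix.mulVecLin_add]
    rintro x ⟨y, rfl⟩
    exact Submodule.mem_sup.2 ⟨A.mulVecLin y, ⟨y, rfl⟩, B.mulVecLin y, ⟨y, rfl⟩, rfl⟩
  exact le_trans (Submodule.finrank_mono h)
    (Submodule.finrank_add_le_finrank_add_finrank _ _)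

lemma myRankSumLe {ι : Type*} {m n : Type*} [Fintype m] [Fintype n]
    (s : Finset ι) (A : ι → Matrix m n ℂ) :
    (∑ i ∈ s, A i).rank ≤ ∑ i ∈ s, (A i).rank := by
  classical
  induction s using Finset.induction with
  | empty => simp
  | @insert a s h ih =>
      rw [Finset.sum_insert h, Finset.sum_insert h]
      exact le_trans (myRankAddLe _ _) (by omega)

lemma myRankVecMulVecLe {m n : Type*} [Fintype m] [Fintype n] (w : m → ℂ) (v : n → ℂ) :
    (Matrix.vecMulVec w v).rank ≤ 1 := by
  classical
  rw [Matrix.vecMulVec_eq (Fin 1)]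
  refine le_trans (Matrix.rank_mul_le_left _ _) ?_
  exact le_of_le_of_eq (Matrix.rank_le_card_width (Matrix.replicateCol (Fin 1) w)) (by simp)


lemma vanish_of_rep {N K : ℕ} {X : (Fin N → Fin K) → ℂ} (hX : IsAntisymTensor X)
    {ℓ : Fin N → Fin K} {i j : Fin N} (hij : i ≠ j) (h : ℓ i = ℓ j) : X ℓ = 0 := by
  have hs := hX (Equiv.swap i j) ℓ
  have hc : ℓ ∘ (Equiv.swap i j) = ℓ := by
    funext a
    simp only [Function.comp_apply, Equiv.swap_apply_def]
    split_ifs with h1 h2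
    · rw [h1]; exact h.symm
    · rw [h2]; exact h
    · rfl
  rw [hc, Equiv.Perm.sign_swap hij] at hs
  have h2 : X ℓ = -X ℓ := by simpa using hs
  have h3 : (2:ℂ) * X ℓ = 0 := by linear_combination h2
  simpa using h3

lemma exists_decomp {N K : ℕ} (hN : 1 ≤ N) (X : (Fin N → Fin K) → ℂ) :
    ∃ x : Fin (K ^ N) → Fin N → Fin K → ℂ,
      ∀ k : Fin N → Fin K, X k = ∑ i, ∏ j, x i j (k j) := by
  classical
  let e : (Fin N → Fin K) ≃ Fin (K ^ N) := finFunctionFinEquiv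
  let j0 : Fin N := ⟨0, hN⟩
  refine ⟨fun i j κ => (if j = j0 then X (e.symm i) else 1) *
    (if κ = e.symm i j then 1 else 0), fun k => ?_⟩
  have hterm : ∀ u : Fin N → Fin K,
      (∏ j, (if j = j0 then X u else 1) * (if k j = u j then 1 else 0))
        = if u = k then X u else 0 := by
    intro u
    rw [Finset.prod_mul_distrib]
    rw [Finset.prod_ite_eq' Finset.univ j0 (fun _ => X u)]
    simp only [Finset.mem_univ, if_true]
    by_cases huk : u = k
    · subst huk; simp
    · have : ∃ j, u j ≠ k j := by
        by_contra hc
        push_neg at hc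
        exact huk (funext hc)
      obtain ⟨j, hj⟩ := this
      rw [if_neg huk, Finset.prod_eq_zero (Finset.mem_univ j) (by simp [Ne.symm hj]), mul_zero]
  calc X k = ∑ u : Fin N → Fin K, if u = k then X u else 0 := by simp
    _ = _ := by
        refine Fintype.sum_equiv e _ _ fun u => ?_
        simp only [Equiv.symm_apply_apply]
        rw [hterm u]

private theorem key_bound {N K : ℕ} (hN : 1 ≤ N)
    (X : (Fin N → Fin K) → ℂ) (hX : IsAntisymTensor X)
    {k : Fin N → Fin K} (hk : X k ≠ 0) (hkinj : Function.Injective k)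
    (p : ℕ) (x : Fin p → Fin N → Fin K → ℂ)
    (hx : ∀ k : Fin N → Fin K, X k = ∑ i, ∏ j, x i j (k j)) :
    N.choose (N / 2) ≤ p := by
  classical
  set m := N / 2 with hm
  have h2 : m + (N - m) = N := by omega
  have hccard : ∀ S : Finset (Fin N), S.card = m → Sᶜ.card = N - m := by
    intro S hS
    rw [Finset.card_compl, hS]
    simp
  let ι := {S : Finset (Fin N) // S.card = m}
  let f1 : ι → Fin m → Fin N := fun S => S.1.orderEmbOfFin S.2
  let f2 : ι → Fin (N - m) → Fin N := fun S => (S.1ᶜ).orderEmbOfFin (hccard S.1 S.2)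
  let rmap : ι → Fin m → Fin K := fun S j => k (f1 S j)
  let cmap : ι → Fin (N - m) → Fin K := fun S j => k (f2 S j)
  let ℓ : ι → ι → Fin N → Fin K :=
    fun S T i => Fin.append (rmap S) (cmap T) (Fin.cast h2.symm i)
  let B : Matrix ι ι ℂ := Matrix.of fun S T => X (ℓ S T)
  have happ : ∀ S T : ι, ∀ i, Fin.append (rmap S) (cmap T) i =
      k (Fin.append (f1 S) (f2 T) i) := by
    intro S T i
    induction i using Fin.addCases with
    | left i => simp [rmap, Fin.append_left]
    | right i => simp [cmap, Fin.append_right]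
  -- off-diagonal entries vanish
  have hoff : ∀ S T : ι, S ≠ T → B S T = 0 := by
    intro S T hST
    have hnsub : ¬ S.1 ⊆ T.1 := by
      intro hsub
      exact hST (Subtype.ext (Finset.eq_of_subset_of_card_le hsub (by rw [S.2, T.2])))
    obtain ⟨e, heS, heT⟩ := Finset.not_subset.mp hnsub
    have he1 : e ∈ Set.range (f1 S) := by
      rw [show Set.range (f1 S) = (S.1 : Set (Fin N)) from Finset.range_orderEmbOfFin _ _]
      exact heS
    have he2 : e ∈ Set.range (f2 T) := by
      rw [show Set.range (f2 T) = ((T.1ᶜ : Finset (Fin N)) : Set (Fin N)) from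
        Finset.range_orderEmbOfFin _ _]
      simpa using heT
    obtain ⟨i1, hi1⟩ := he1
    obtain ⟨i2, hi2⟩ := he2
    have hp1 : ℓ S T (Fin.cast h2 (Fin.castAdd (N - m) i1)) = k e := by
      show Fin.append (rmap S) (cmap T) (Fin.cast h2.symm (Fin.cast h2 (Fin.castAdd (N - m) i1))) = k e
      rw [show Fin.cast h2.symm (Fin.cast h2 (Fin.castAdd (N - m) i1)) = Fin.castAdd (N - m) i1
        from Fin.ext rfl]
      rw [Fin.append_left]
      simp [rmap, hi1]
    have hp2 : ℓ S T (Fin.cast h2 (Fin.natAdd m i2)) = k e := by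
      show Fin.append (rmap S) (cmap T) (Fin.cast h2.symm (Fin.cast h2 (Fin.natAdd m i2))) = k e
      rw [show Fin.cast h2.symm (Fin.cast h2 (Fin.natAdd m i2)) = Fin.natAdd m i2
        from Fin.ext rfl]
      rw [Fin.append_right]
      simp [cmap, hi2]
    have hne : Fin.cast h2 (Fin.castAdd (N - m) i1) ≠ Fin.cast h2 (Fin.natAdd m i2) := by
      have := i1.2
      simp only [Fin.ne_iff_vne, Fin.coe_cast, Fin.coe_castAdd, Fin.coe_natAdd]
      omega
    exact vanish_of_rep hX hne (hp1.trans hp2.symm)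
  -- diagonal entries are nonzero
  have hdiag : ∀ S : ι, B S S ≠ 0 := by
    intro S
    have hGinj : Function.Injective (Fin.append (f1 S) (f2 S)) := by
      intro a b hab
      induction a using Fin.addCases with
      | left a =>
        induction b using Fin.addCases with
        | left b =>
          rw [Fin.append_left, Fin.append_left] at hab
          exact congrArg _ ((S.1.orderEmbOfFin S.2).injective hab)
        | right b =>
          rw [Fin.append_left, Fin.append_right] at hab
          have h1 : f1 S a ∈ S.1 := Finset.orderEmbOfFin_mem _ _ _
          have h3 : f2 S b ∈ S.1ᶜ := Finset.orderEmbOfFin_mem _ _ _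
          rw [hab] at h1
          simp only [Finset.mem_compl] at h3
          exact absurd h1 h3
      | right a =>
        induction b using Fin.addCases with
        | left b =>
          rw [Fin.append_right, Fin.append_left] at hab
          have h1 : f1 S b ∈ S.1 := Finset.orderEmbOfFin_mem _ _ _
          have h3 : f2 S a ∈ S.1ᶜ := Finset.orderEmbOfFin_mem _ _ _
          rw [← hab] at h1
          simp only [Finset.mem_compl] at h3
          exact absurd h1 h3
        | right b =>
          rw [Fin.append_right, Fin.append_right] at hab
          exact congrArg _ (((S.1ᶜ).orderEmbOfFin (hccard S.1 S.2)).injective hab)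
    have hginj : Function.Injective
        (fun i : Fin N => Fin.append (f1 S) (f2 S) (Fin.cast h2.symm i)) := by
      intro a b hab
      have h4 := congrArg Fin.val (hGinj hab)
      simp only [Fin.coe_cast] at h4
      exact Fin.ext h4
    let σ : Equiv.Perm (Fin N) :=
      Equiv.ofBijective _ (Finite.injective_iff_bijective.mp hginj)
    have hℓ : ℓ S S = k ∘ σ := by
      funext i
      exact happ S S (Fin.cast h2.symm i)
    have : B S S = ((Equiv.Perm.sign σ : ℤ) : ℂ) * X k := by
      show X (ℓ S S) = _
      rw [hℓ]
      exact hX σ k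
    rw [this]
    exact mul_ne_zero (by simp) hk
  -- B is diagonal with nonzero diagonal, so rank = card ι = choose
  have hBdiag : B = Matrix.diagonal (fun S => B S S) := by
    ext S T
    by_cases hST : S = T
    · subst hST; simp
    · rw [hoff S T hST, Matrix.diagonal_apply_ne _ hST]
  have hrankB : B.rank = N.choose m := by
    rw [hBdiag, Matrix.rank_diagonal]
    rw [Fintype.card_congr (Equiv.subtypeUnivEquiv hdiag)]
    rw [show Fintype.card ι = (Fintype.card (Fin N)).choose m from Fintype.card_finset_len m]
    rw [Fintype.card_fin]
  -- B is a sum of p rank-one matrices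
  have hBsum : B = ∑ i : Fin p, Matrix.vecMulVec
      (fun S : ι => ∏ j : Fin m, x i (Fin.cast h2 (Fin.castAdd (N - m) j)) (rmap S j))
      (fun T : ι => ∏ j : Fin (N - m), x i (Fin.cast h2 (Fin.natAdd m j)) (cmap T j)) := by
    ext S T
    show X (ℓ S T) = _
    rw [hx (ℓ S T)]
    rw [show (∑ i : Fin p, Matrix.vecMulVec _ _) S T
      = ∑ i : Fin p, (∏ j : Fin m, x i (Fin.cast h2 (Fin.castAdd (N - m) j)) (rmap S j)) *
          (∏ j : Fin (N - m), x i (Fin.cast h2 (Fin.natAdd m j)) (cmap T j)) from by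
        simp [Matrix.sum_apply, Matrix.vecMulVec_apply]]
    refine Finset.sum_congr rfl fun i _ => ?_
    rw [← Equiv.prod_comp (finCongr h2) (fun j => x i j (ℓ S T j))]
    rw [Fin.prod_univ_add (fun j' : Fin (m + (N - m)) =>
      x i (finCongr h2 j') (ℓ S T (finCongr h2 j')))]
    congr 1
    · refine Finset.prod_congr rfl fun j _ => ?_
      congr 1
      show Fin.append (rmap S) (cmap T) (Fin.cast h2.symm (Fin.cast h2 (Fin.castAdd (N - m) j))) = _
      rw [show Fin.cast h2.symm (Fin.cast h2 (Fin.castAdd (N - m) j)) = Fin.castAdd (N - m) j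
        from Fin.ext rfl]
      rw [Fin.append_left]
    · refine Finset.prod_congr rfl fun j _ => ?_
      congr 1
      show Fin.append (rmap S) (cmap T) (Fin.cast h2.symm (Fin.cast h2 (Fin.natAdd m j))) = _
      rw [show Fin.cast h2.symm (Fin.cast h2 (Fin.natAdd m j)) = Fin.natAdd m j
        from Fin.ext rfl]
      rw [Fin.append_right]
  have hrank_le : B.rank ≤ p := by
    rw [hBsum]
    refine le_trans (myRankSumLe Finset.univ _) ?_
    refine le_trans (Finset.sum_le_sum fun i _ => myRankVecMulVecLe _ _) ?_
    simp
  omega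

theorem cpRank_antisym_lower_bound {N K : ℕ} (hN : 1 ≤ N) (hKN : N ≤ K)
    (X : (Fin N → Fin K) → ℂ) (hX : IsAntisymTensor X) (hX0 : X ≠ 0) :
    N.choose (N / 2) ≤ cpRank X := by
  classical
  obtain ⟨k, hk⟩ : ∃ k, X k ≠ 0 := by
    by_contra hc
    push_neg at hc
    exact hX0 (funext hc)
  have hne : {p : ℕ | ∃ x : Fin p → Fin N → Fin K → ℂ,
      ∀ k : Fin N → Fin K, X k = ∑ i, ∏ j, x i j (k j)}.Nonempty :=
    ⟨K ^ N, exists_decomp hN X⟩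
  have hmem := Nat.sInf_mem hne
  obtain ⟨x, hx⟩ := hmem
  exact key_bound hN X hX hk (by
    intro a b hab
    by_contra hne'
    exact hk (vanish_of_rep hX hne' hab)) _ x hx
end

section
/- Let K ≥ N ≥ 1 be natural numbers and let X be an antisymmetric N-th order tensor of dimension K over ℂ. Then rank_cp(X) ≤ N! · binom(K, N) · (5/6)^{⌊N/3⌋}, the inequality understood in the real numbers. -/
open scoped BigOperators

namespace CPAux

attribute [local instance] Classical.propDecidable



variable {N K : ℕ}

def HasDecomp (ι : Type) [Fintype ι] {N K : ℕ} (X : (Fin N → Fin K) → ℂ) : Prop :=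
  ∃ x : ι → Fin N → Fin K → ℂ, ∀ k : Fin N → Fin K, X k = ∑ i, ∏ j, x i j (k j)

lemma HasDecomp.reindex {ι ι' : Type} [Fintype ι] [Fintype ι'] (e : ι ≃ ι')
    {X : (Fin N → Fin K) → ℂ} (h : HasDecomp ι X) : HasDecomp ι' X := by
  obtain ⟨x, hx⟩ := h
  refine ⟨fun i => x (e.symm i), fun k => ?_⟩
  rw [hx k]
  exact (Equiv.sum_comp e.symm fun i => ∏ j, x i j (k j)).symm

lemma cpRank_le {ι : Type} [Fintype ι] {X : (Fin N → Fin K) → ℂ}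
    (h : HasDecomp ι X) : cpRank X ≤ Fintype.card ι := by
  obtain ⟨x, hx⟩ := h.reindex (Fintype.equivFin ι)
  exact Nat.sInf_le ⟨x, hx⟩

lemma detTensor_eq_det (N : ℕ) (ℓ : Fin N → Fin N) :
    detTensor N ℓ = Matrix.det (Matrix.of fun i j => if ℓ j = i then (1 : ℂ) else 0) := by
  rw [Matrix.det_apply, detTensor]
  refine Finset.sum_congr rfl fun σ _ => ?_
  have h1 : (∏ i, Matrix.of (fun i j => if ℓ j = i then (1:ℂ) else 0) (σ i) i)
      = if ℓ = ⇑σ then 1 else 0 := by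
    by_cases h : ℓ = ⇑σ
    · rw [if_pos h]
      refine Finset.prod_eq_one fun i _ => ?_
      simp [Matrix.of_apply, h]
    · rw [if_neg h]
      obtain ⟨i, hi⟩ := Function.ne_iff.1 h
      exact Finset.prod_eq_zero (Finset.mem_univ i) (by simp [Matrix.of_apply, hi])
  rw [h1]
  by_cases h : ℓ = ⇑σ <;> simp [h, Units.smul_def, zsmul_eq_mul]

lemma hasDecomp_det0 : HasDecomp (Fin 1) (detTensor 0) := by
  refine ⟨fun _ _ _ => 1, fun k => ?_⟩
  rw [detTensor_eq_det]
  simp [Matrix.det_fin_zero]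

lemma hasDecomp_det1 : HasDecomp (Fin 1) (detTensor 1) := by
  refine ⟨fun _ _ _ => 1, fun k => ?_⟩
  rw [detTensor_eq_det]
  have : k 0 = 0 := Subsingleton.elim _ _
  simp [Matrix.det_fin_one, this]

def xdet2 : Fin 2 → Fin 2 → Fin 2 → ℂ :=
  ![![![1,0], ![0,1]], ![![0,-1], ![1,0]]]

lemma hasDecomp_det2 : HasDecomp (Fin 2) (detTensor 2) := by
  refine ⟨xdet2, fun k => ?_⟩
  have hk : k = ![k 0, k 1] := by
    funext x; fin_cases x <;> rfl
  rw [hk, detTensor_eq_det]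
  generalize k 0 = a; generalize k 1 = b
  fin_cases a <;> fin_cases b <;>
    · simp only [Matrix.det_fin_two, Fin.sum_univ_two, Fin.prod_univ_two, xdet2,
        Matrix.of_apply, Matrix.cons_val', Matrix.cons_val_zero, Matrix.cons_val_one,
        Matrix.head_cons, Matrix.empty_val', Matrix.cons_val_fin_one, Matrix.head_fin_const,
        Matrix.vecHead, Matrix.vecTail, Fin.ext_iff]
      norm_num [Matrix.vecHead, Matrix.vecTail, Function.comp]

def xdet3 : Fin 5 → Fin 3 → Fin 3 → ℂ :=
  ![![![0,-1,1], ![1,-1,0], ![1,0,1]],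
    ![![1,-1,1], ![0,1,0], ![0,0,1]],
    ![![1,0,0], ![0,0,1], ![0,-1,0]],
    ![![0,1,0], ![1,-1,1], ![1,0,0]],
    ![![0,0,1], ![1,0,0], ![-1,1,-1]]]

set_option maxHeartbeats 1000000 in
lemma hasDecomp_det3 : HasDecomp (Fin 5) (detTensor 3) := by
  refine ⟨xdet3, fun k => ?_⟩
  have hk : k = ![k 0, k 1, k 2] := by
    funext x; fin_cases x <;> rfl
  rw [hk, detTensor_eq_det]
  generalize k 0 = a; generalize k 1 = b; generalize k 2 = c
  fin_cases a <;> fin_cases b <;> fin_cases c <;>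
    · simp only [Matrix.det_fin_three, Fin.sum_univ_five, Fin.prod_univ_three, xdet3,
        Matrix.of_apply, Matrix.cons_val', Matrix.cons_val_zero, Matrix.cons_val_one,
        Matrix.head_cons, Matrix.empty_val', Matrix.cons_val_fin_one, Matrix.head_fin_const,
        Matrix.cons_val_two, Matrix.tail_cons, Matrix.vecHead, Matrix.vecTail, Fin.ext_iff,
        Matrix.cons_val]
      norm_num [Matrix.vecHead, Matrix.vecTail, Function.comp]

lemma HasDecomp.smul {ι : Type} [Fintype ι] (hN : 1 ≤ N) (c : ℂ) {X : (Fin N → Fin K) → ℂ}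
    (h : HasDecomp ι X) : HasDecomp ι (fun k => c * X k) := by
  obtain ⟨x, hx⟩ := h
  set z : Fin N := ⟨0, hN⟩
  refine ⟨fun i => Function.update (x i) z (fun k => c * x i z k), fun k => ?_⟩
  simp only [hx k, Finset.mul_sum]
  refine Finset.sum_congr rfl fun i _ => ?_
  have e1 : ∀ j ∈ Finset.univ.erase z,
      Function.update (x i) z (fun k' => c * x i z k') j (k j) = x i j (k j) := by
    intro j hj
    rw [Function.update_of_ne (Finset.ne_of_mem_erase hj)]
  rw [← Finset.prod_erase_mul _ _ (Finset.mem_univ z),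
      ← Finset.prod_erase_mul _ _ (Finset.mem_univ z),
      Finset.prod_congr rfl e1, Function.update_self]
  ring

lemma hasDecomp_sum {α : Type} [Fintype α] {ι : α → Type} [∀ a, Fintype (ι a)]
    {X : α → (Fin N → Fin K) → ℂ} (h : ∀ a, HasDecomp (ι a) (X a)) :
    HasDecomp ((a : α) × ι a) (fun k => ∑ a, X a k) := by
  choose x hx using h
  refine ⟨fun t => x t.1 t.2, fun k => ?_⟩
  rw [← Finset.univ_sigma_univ, Finset.sum_sigma]
  exact Finset.sum_congr rfl fun a _ => hx a k

lemma hasDecomp_mul {A B : ℕ} {ι κ : Type} [Fintype ι] [Fintype κ]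
    {Y : (Fin A → Fin K) → ℂ} {Z : (Fin B → Fin K) → ℂ}
    (hY : HasDecomp ι Y) (hZ : HasDecomp κ Z) :
    HasDecomp (ι × κ)
      (fun ℓ : Fin (A+B) → Fin K => Y (ℓ ∘ Fin.castAdd B) * Z (ℓ ∘ Fin.natAdd A)) := by
  obtain ⟨y, hy⟩ := hY; obtain ⟨z, hz⟩ := hZ
  refine ⟨fun t => Fin.addCases (y t.1) (z t.2), fun ℓ => ?_⟩
  have key : ∀ (i : ι) (i' : κ),
      (∏ j, Fin.addCases (motive := fun _ => Fin K → ℂ) (y i) (z i') j (ℓ j))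
        = (∏ j, y i j ((ℓ ∘ Fin.castAdd B) j)) * ∏ j, z i' j ((ℓ ∘ Fin.natAdd A) j) := by
    intro i i'
    rw [Fin.prod_univ_add]
    congr 1
    · refine Finset.prod_congr rfl fun j _ => ?_
      rw [Fin.addCases_left]; rfl
    · refine Finset.prod_congr rfl fun j _ => ?_
      rw [Fin.addCases_right]; rfl
  show Y (ℓ ∘ Fin.castAdd B) * Z (ℓ ∘ Fin.natAdd A) = _
  rw [hy, hz, Finset.sum_mul_sum, Fintype.sum_prod_type]
  exact Finset.sum_congr rfl fun i _ => Finset.sum_congr rfl fun i' _ => (key i i').symm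

lemma hasDecomp_basisTensor {ι : Type} [Fintype ι] {u : Fin N → Fin K}
    (hu : Function.Injective u) (h : HasDecomp ι (detTensor N)) :
    HasDecomp ι (basisTensor u) := by
  obtain ⟨y, hy⟩ := h
  refine ⟨fun i j k => ∑ m, if k = u m then y i j m else 0, fun ℓ => ?_⟩
  by_cases hc : ∀ j, ∃ m, ℓ j = u m
  · choose m hm using hc
    have h1 : ∀ (i : ι) (j : Fin N),
        (∑ m', if ℓ j = u m' then y i j m' else 0) = y i j (m j) := by
      intro i j
      rw [Finset.sum_eq_single (m j)]
      · rw [if_pos (hm j)]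
      · intro m' _ hne
        rw [if_neg]
        intro hEq
        exact hne (hu ((hm j).symm.trans hEq)).symm
      · simp
    simp_rw [h1]
    rw [← hy]
    unfold basisTensor detTensor
    refine Finset.sum_congr rfl fun π _ => ?_
    have hcond : (ℓ = u ∘ ⇑π) ↔ (m = ⇑π) := by
      constructor
      · intro hl
        funext j
        exact hu ((hm j).symm.trans (congrFun hl j))
      · intro hl
        funext j
        rw [hm j, hl]
        rfl
    exact if_congr hcond rfl rfl
  · push_neg at hc
    obtain ⟨j₀, hj₀⟩ := hc
    have h2 : ∀ i : ι, (∏ j, ∑ m, if ℓ j = u m then y i j m else 0) = 0 := by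
      intro i
      apply Finset.prod_eq_zero (Finset.mem_univ j₀)
      apply Finset.sum_eq_zero
      intro m _
      exact if_neg (hj₀ m)
    rw [Finset.sum_congr rfl fun i _ => h2 i, Finset.sum_const, smul_zero]
    unfold basisTensor
    exact Finset.sum_eq_zero fun π _ => if_neg (fun hl => hj₀ (π j₀) (congrFun hl j₀))


variable {A B : ℕ}

lemma card_compl_eq {S : Finset (Fin (A+B))} (hS : S.card = A) : Sᶜ.card = B := by
  rw [Finset.card_compl, hS, Fintype.card_fin]; omega

def shuffleFun (S : Finset (Fin (A+B))) (hS : S.card = A) : Fin A ⊕ Fin B → Fin (A+B) :=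
  Sum.elim (S.orderEmbOfFin hS) (Sᶜ.orderEmbOfFin (card_compl_eq hS))

lemma shuffleFun_bijective (S : Finset (Fin (A+B))) (hS : S.card = A) :
    Function.Bijective (shuffleFun S hS) := by
  rw [Fintype.bijective_iff_injective_and_card]
  constructor
  · rintro (a | a) (b | b) hab <;> simp only [shuffleFun, Sum.elim_inl, Sum.elim_inr] at hab
    · exact congrArg Sum.inl ((S.orderEmbOfFin hS).injective hab)
    · exact absurd (hab ▸ S.orderEmbOfFin_mem hS a)
        (fun h => (Finset.mem_compl.1 (Sᶜ.orderEmbOfFin_mem (card_compl_eq hS) b)) h)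
    · exact absurd (hab ▸ Sᶜ.orderEmbOfFin_mem (card_compl_eq hS) a)
        (fun h => (Finset.mem_compl.1 h) (S.orderEmbOfFin_mem hS b))
    · exact congrArg Sum.inr ((Sᶜ.orderEmbOfFin (card_compl_eq hS)).injective hab)
  · simp [Fintype.card_sum]

noncomputable def shuffle (S : Finset (Fin (A+B))) (hS : S.card = A) :
    Equiv.Perm (Fin (A+B)) :=
  finSumFinEquiv.symm.trans (Equiv.ofBijective _ (shuffleFun_bijective S hS))

lemma shuffle_castAdd (S : Finset (Fin (A+B))) (hS : S.card = A) (i : Fin A) :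
    shuffle S hS (Fin.castAdd B i) = S.orderEmbOfFin hS i := by
  simp [shuffle, Equiv.ofBijective, shuffleFun]

lemma shuffle_natAdd (S : Finset (Fin (A+B))) (hS : S.card = A) (i : Fin B) :
    shuffle S hS (Fin.natAdd A i) = Sᶜ.orderEmbOfFin (card_compl_eq hS) i := by
  simp [shuffle, Equiv.ofBijective, shuffleFun]

noncomputable def phi (S : Finset (Fin (A+B))) (hS : S.card = A)
    (π₁ : Equiv.Perm (Fin A)) (π₂ : Equiv.Perm (Fin B)) : Equiv.Perm (Fin (A+B)) :=
  (finSumFinEquiv.permCongr (π₁.sumCongr π₂)).trans (shuffle S hS)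

lemma phi_castAdd (S : Finset (Fin (A+B))) (hS : S.card = A)
    (π₁ : Equiv.Perm (Fin A)) (π₂ : Equiv.Perm (Fin B)) (i : Fin A) :
    phi S hS π₁ π₂ (Fin.castAdd B i) = S.orderEmbOfFin hS (π₁ i) := by
  simp only [phi, Equiv.trans_apply, Equiv.permCongr_apply,
    finSumFinEquiv_symm_apply_castAdd, Equiv.sumCongr_apply, Sum.map_inl,
    finSumFinEquiv_apply_left]
  exact shuffle_castAdd S hS (π₁ i)

lemma phi_natAdd (S : Finset (Fin (A+B))) (hS : S.card = A)
    (π₁ : Equiv.Perm (Fin A)) (π₂ : Equiv.Perm (Fin B)) (i : Fin B) :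
    phi S hS π₁ π₂ (Fin.natAdd A i) = Sᶜ.orderEmbOfFin (card_compl_eq hS) (π₂ i) := by
  simp only [phi, Equiv.trans_apply, Equiv.permCongr_apply,
    finSumFinEquiv_symm_apply_natAdd, Equiv.sumCongr_apply, Sum.map_inr,
    finSumFinEquiv_apply_right]
  exact shuffle_natAdd S hS (π₂ i)

lemma sign_phi (S : Finset (Fin (A+B))) (hS : S.card = A)
    (π₁ : Equiv.Perm (Fin A)) (π₂ : Equiv.Perm (Fin B)) :
    Equiv.Perm.sign (phi S hS π₁ π₂)
      = Equiv.Perm.sign (shuffle S hS) * (Equiv.Perm.sign π₁ * Equiv.Perm.sign π₂) := by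
  have : phi S hS π₁ π₂ = shuffle S hS * finSumFinEquiv.permCongr (π₁.sumCongr π₂) := rfl
  rw [this, map_mul, Equiv.Perm.sign_permCongr, Equiv.Perm.sign_sumCongr]

abbrev STy (A B : ℕ) : Type := {S : Finset (Fin (A+B)) // S.card = A}

lemma phi_injective :
    Function.Injective (fun t : STy A B × Equiv.Perm (Fin A) × Equiv.Perm (Fin B) =>
      phi t.1.1 t.1.2 t.2.1 t.2.2) := by
  have key : ∀ (U : Finset (Fin (A+B))) (hU : U.card = A) (σ₁ : Equiv.Perm (Fin A))
      (σ₂ : Equiv.Perm (Fin B)),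
      Finset.image (fun j => phi U hU σ₁ σ₂ (Fin.castAdd B j)) Finset.univ = U := by
    intro U hU σ₁ σ₂
    apply Finset.eq_of_subset_of_card_le
    · intro x hx
      obtain ⟨j, _, rfl⟩ := Finset.mem_image.1 hx
      rw [phi_castAdd]
      exact U.orderEmbOfFin_mem hU (σ₁ j)
    · have hinj : Function.Injective (fun j : Fin A => phi U hU σ₁ σ₂ (Fin.castAdd B j)) := by
        intro a b hab
        exact (Fin.castAddEmb B).injective ((phi U hU σ₁ σ₂).injective hab)
      rw [Finset.card_image_of_injective _ hinj, Finset.card_univ, Fintype.card_fin, hU]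
  rintro ⟨⟨S, hS⟩, π₁, π₂⟩ ⟨⟨T, hT⟩, ρ₁, ρ₂⟩ h
  simp only at h
  have hST : S = T := by
    rw [← key S hS π₁ π₂, ← key T hT ρ₁ ρ₂, h]
  subst hST
  have hπ₁ : π₁ = ρ₁ := by
    apply Equiv.ext; intro i
    apply (S.orderEmbOfFin hS).injective
    rw [← phi_castAdd S hS π₁ π₂ i, ← phi_castAdd S hT ρ₁ ρ₂ i, h]
  have hπ₂ : π₂ = ρ₂ := by
    apply Equiv.ext; intro i
    apply (Sᶜ.orderEmbOfFin (card_compl_eq hS)).injective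
    rw [← phi_natAdd S hS π₁ π₂ i, ← phi_natAdd S hT ρ₁ ρ₂ i, h]
  subst hπ₁; subst hπ₂
  rfl


lemma card_STy : Fintype.card (STy A B) = (A+B).choose A := by
  rw [Fintype.card_subtype]
  have h1 : Finset.filter (fun S : Finset (Fin (A+B)) => S.card = A) Finset.univ
      = Finset.powersetCard A Finset.univ := by
    ext S
    simp [Finset.mem_powersetCard_univ]
  rw [h1, Finset.card_powersetCard, Finset.card_univ, Fintype.card_fin]

lemma phi_bijective :
    Function.Bijective (fun t : STy A B × Equiv.Perm (Fin A) × Equiv.Perm (Fin B) =>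
      phi t.1.1 t.1.2 t.2.1 t.2.2) := by
  rw [Fintype.bijective_iff_injective_and_card]
  refine ⟨phi_injective, ?_⟩
  rw [Fintype.card_prod, Fintype.card_prod, card_STy, Fintype.card_perm, Fintype.card_perm,
    Fintype.card_perm, Fintype.card_fin, Fintype.card_fin, Fintype.card_fin]
  have h := Nat.choose_mul_factorial_mul_factorial (Nat.le_add_right A B)
  rw [Nat.add_sub_cancel_left] at h
  rw [← h]; ring

set_option maxHeartbeats 3200000 in
lemma laplace (hA : 0 < A) (ℓ : Fin (A+B) → Fin (A+B)) :
    detTensor (A+B) ℓ = ∑ S : STy A B,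
      ((Equiv.Perm.sign (shuffle S.1 S.2) : ℤ) : ℂ) *
        (basisTensor (⇑(S.1.orderEmbOfFin S.2)) (ℓ ∘ Fin.castAdd B) *
         basisTensor (⇑((S.1)ᶜ.orderEmbOfFin (card_compl_eq S.2))) (ℓ ∘ Fin.natAdd A)) := by
  have expand : ∀ S : STy A B,
      ((Equiv.Perm.sign (shuffle S.1 S.2) : ℤ) : ℂ) *
        (basisTensor (⇑(S.1.orderEmbOfFin S.2)) (ℓ ∘ Fin.castAdd B) *
         basisTensor (⇑((S.1)ᶜ.orderEmbOfFin (card_compl_eq S.2))) (ℓ ∘ Fin.natAdd A))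
      = ∑ π₁ : Equiv.Perm (Fin A), ∑ π₂ : Equiv.Perm (Fin B),
          ((Equiv.Perm.sign (shuffle S.1 S.2) : ℤ) : ℂ) *
          ((if (ℓ ∘ Fin.castAdd B) = ⇑(S.1.orderEmbOfFin S.2) ∘ ⇑π₁
              then ((Equiv.Perm.sign π₁ : ℤ) : ℂ) else 0) *
           (if (ℓ ∘ Fin.natAdd A) = ⇑((S.1)ᶜ.orderEmbOfFin (card_compl_eq S.2)) ∘ ⇑π₂
              then ((Equiv.Perm.sign π₂ : ℤ) : ℂ) else 0)) := by
    intro S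
    unfold basisTensor
    rw [Finset.sum_mul_sum, Finset.mul_sum]
    refine Finset.sum_congr rfl fun π₁ _ => ?_
    rw [Finset.mul_sum]
  rw [Finset.sum_congr rfl fun S _ => expand S]
  rw [detTensor]
  have hstep : ∑ S : STy A B, ∑ π₁ : Equiv.Perm (Fin A), ∑ π₂ : Equiv.Perm (Fin B),
      ((Equiv.Perm.sign (shuffle S.1 S.2) : ℤ) : ℂ) *
      ((if (ℓ ∘ Fin.castAdd B) = ⇑(S.1.orderEmbOfFin S.2) ∘ ⇑π₁
          then ((Equiv.Perm.sign π₁ : ℤ) : ℂ) else 0) *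
       (if (ℓ ∘ Fin.natAdd A) = ⇑((S.1)ᶜ.orderEmbOfFin (card_compl_eq S.2)) ∘ ⇑π₂
          then ((Equiv.Perm.sign π₂ : ℤ) : ℂ) else 0))
      = ∑ t : STy A B × Equiv.Perm (Fin A) × Equiv.Perm (Fin B),
      ((Equiv.Perm.sign (shuffle t.1.1 t.1.2) : ℤ) : ℂ) *
      ((if (ℓ ∘ Fin.castAdd B) = ⇑(t.1.1.orderEmbOfFin t.1.2) ∘ ⇑t.2.1
          then ((Equiv.Perm.sign t.2.1 : ℤ) : ℂ) else 0) *
       (if (ℓ ∘ Fin.natAdd A) = ⇑((t.1.1)ᶜ.orderEmbOfFin (card_compl_eq t.1.2)) ∘ ⇑t.2.2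
          then ((Equiv.Perm.sign t.2.2 : ℤ) : ℂ) else 0)) := by
    rw [Fintype.sum_prod_type]
    refine Finset.sum_congr rfl fun S _ => ?_
    rw [Fintype.sum_prod_type]
  rw [hstep]
  refine (Fintype.sum_bijective _ phi_bijective _ _ ?_).symm
  rintro ⟨⟨S, hS⟩, π₁, π₂⟩
  simp only
  set Φ := phi S hS π₁ π₂ with hΦ
  by_cases h1 : (ℓ ∘ Fin.castAdd B) = ⇑(S.orderEmbOfFin hS) ∘ ⇑π₁
  · by_cases h2 : (ℓ ∘ Fin.natAdd A) = ⇑(Sᶜ.orderEmbOfFin (card_compl_eq hS)) ∘ ⇑π₂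
    · have hl : ℓ = ⇑Φ := by
        funext x
        induction x using Fin.addCases with
        | left i => rw [hΦ, phi_castAdd]; exact congrFun h1 i
        | right i => rw [hΦ, phi_natAdd]; exact congrFun h2 i
      rw [if_pos h1, if_pos h2, if_pos hl, hΦ, sign_phi]
      push_cast
      ring
    · have hnl : ℓ ≠ ⇑Φ := by
        intro hl
        apply h2
        funext i
        rw [Function.comp_apply, Function.comp_apply, ← phi_natAdd S hS π₁ π₂ i, ← hΦ, ← hl]
      rw [if_neg h2, if_neg hnl, mul_zero, mul_zero]
  · have hnl : ℓ ≠ ⇑Φ := by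
      intro hl
      apply h1
      funext i
      rw [Function.comp_apply, Function.comp_apply, ← phi_castAdd S hS π₁ π₂ i, ← hΦ, ← hl]
    rw [if_neg h1, if_neg hnl, zero_mul, mul_zero]


lemma HasDecomp.congr {ι : Type} [Fintype ι] {N K : ℕ} {X Y : (Fin N → Fin K) → ℂ}
    (h : HasDecomp ι X) (hXY : ∀ k, Y k = X k) : HasDecomp ι Y := by
  obtain ⟨x, hx⟩ := h
  exact ⟨x, fun k => (hXY k).trans (hx k)⟩

lemma hasDecomp_det_add {A B : ℕ} {ι κ : Type} [Fintype ι] [Fintype κ] (hA : 0 < A)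
    (hDA : HasDecomp ι (detTensor A)) (hDB : HasDecomp κ (detTensor B)) :
    HasDecomp ((_ : STy A B) × (ι × κ)) (detTensor (A+B)) := by
  have h1 : ∀ S : STy A B, HasDecomp (ι × κ)
      (fun ℓ : Fin (A+B) → Fin (A+B) =>
        ((Equiv.Perm.sign (shuffle S.1 S.2) : ℤ) : ℂ) *
        (basisTensor (⇑(S.1.orderEmbOfFin S.2)) (ℓ ∘ Fin.castAdd B) *
         basisTensor (⇑((S.1)ᶜ.orderEmbOfFin (card_compl_eq S.2))) (ℓ ∘ Fin.natAdd A))) := by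
    intro S
    exact (hasDecomp_mul (hasDecomp_basisTensor (S.1.orderEmbOfFin S.2).injective hDA)
      (hasDecomp_basisTensor ((S.1)ᶜ.orderEmbOfFin (card_compl_eq S.2)).injective hDB)).smul
      (by omega) _
  exact (hasDecomp_sum h1).congr (fun ℓ => laplace hA ℓ)

lemma card_subtype_card {α : Type} [Fintype α] [DecidableEq α] (n : ℕ) :
    Fintype.card {s : Finset α // s.card = n} = (Fintype.card α).choose n := by
  rw [Fintype.card_subtype]
  have h1 : Finset.filter (fun S : Finset α => S.card = n) Finset.univ
      = Finset.powersetCard n Finset.univ := by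
    ext S
    simp [Finset.mem_powersetCard_univ]
  rw [h1, Finset.card_powersetCard, Finset.card_univ]

lemma det_decomp : ∀ N : ℕ, ∃ p : ℕ, HasDecomp (Fin p) (detTensor N) ∧
    (p : ℝ) ≤ (N.factorial : ℝ) * (5/6 : ℝ) ^ (N / 3) := by
  intro N
  induction N using Nat.strong_induction_on with
  | _ n ih =>
    match n, ih with
    | 0, _ => exact ⟨1, hasDecomp_det0, by norm_num⟩
    | 1, _ => exact ⟨1, hasDecomp_det1, by norm_num [Nat.factorial]⟩
    | 2, _ => exact ⟨2, hasDecomp_det2, by norm_num [Nat.factorial]⟩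
    | (M+3), ih => ?_
    obtain ⟨p, hp, hple⟩ := ih M (by omega)
    have e : M + 3 = 3 + M := Nat.add_comm M 3
    rw [e]
    have h := hasDecomp_det_add (A := 3) (B := M) (by norm_num) hasDecomp_det3 hp
    have hcard : Fintype.card ((_ : STy 3 M) × (Fin 5 × Fin p))
        = (3+M).choose 3 * (5 * p) := by
      rw [Fintype.card_sigma]
      simp only [Fintype.card_prod, Fintype.card_fin]
      rw [Finset.sum_const, smul_eq_mul, Finset.card_univ]
      rw [card_STy]
    refine ⟨(3+M).choose 3 * (5 * p), h.reindex (Fintype.equivFinOfCardEq hcard), ?_⟩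
    have hdiv : (3+M)/3 = M/3 + 1 := by omega
    have hch : (3+M).choose 3 * 6 * M.factorial = (3+M).factorial := by
      have h2 := Nat.choose_mul_factorial_mul_factorial (show 3 ≤ 3 + M by omega)
      rw [show 3 + M - 3 = M by omega] at h2
      rw [show Nat.factorial 3 = 6 from rfl] at h2
      exact h2
    have hcast : ((3+M).choose 3 : ℝ) * 6 * (M.factorial : ℝ) = ((3+M).factorial : ℝ) := by
      exact_mod_cast congrArg (fun x : ℕ => (x : ℝ)) hch
    have hchpos : (0:ℝ) ≤ ((3+M).choose 3 : ℝ) := by positivity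
    calc ((3+M).choose 3 * (5 * p) : ℕ) = 5 * ((3+M).choose 3 : ℝ) * (p : ℝ) := by
          push_cast; ring
      _ ≤ 5 * ((3+M).choose 3 : ℝ) * ((M.factorial : ℝ) * (5/6 : ℝ) ^ (M / 3)) := by
          apply mul_le_mul_of_nonneg_left hple (by positivity)
      _ = (((3+M).choose 3 : ℝ) * 6 * (M.factorial : ℝ)) * ((5/6 : ℝ) ^ (M / 3) * (5/6)) := by
          ring
      _ = ((3+M).factorial : ℝ) * (5/6 : ℝ) ^ ((3+M) / 3) := by
          rw [hcast, hdiv, pow_succ]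

lemma X_eq_zero_of_not_injective {N K : ℕ} {X : (Fin N → Fin K) → ℂ}
    (hX : IsAntisymTensor X) {ℓ : Fin N → Fin K} (h : ¬ Function.Injective ℓ) :
    X ℓ = 0 := by
  rw [Function.not_injective_iff] at h
  obtain ⟨i, j, hij, hne⟩ := h
  have hswap : ℓ ∘ ⇑(Equiv.swap i j) = ℓ := by
    funext x
    rcases eq_or_ne x i with rfl | hxi
    · rw [Function.comp_apply, Equiv.swap_apply_left, hij]
    · rcases eq_or_ne x j with rfl | hxj
      · rw [Function.comp_apply, Equiv.swap_apply_right, hij]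
      · rw [Function.comp_apply, Equiv.swap_apply_of_ne_of_ne hxi hxj]
  have h2 := hX (Equiv.swap i j) ℓ
  rw [hswap, Equiv.Perm.sign_swap hne] at h2
  have h3 : X ℓ = - X ℓ := by
    simpa using h2
  linear_combination h3 / 2

lemma antisym_expand {N K : ℕ} {X : (Fin N → Fin K) → ℂ} (hX : IsAntisymTensor X)
    (ℓ : Fin N → Fin K) :
    X ℓ = ∑ u : {u : Fin N → Fin K // StrictMono u}, X u.1 * basisTensor u.1 ℓ := by
  by_cases hinj : Function.Injective ℓ
  · set π₀ := Tuple.sort ℓ with hπ₀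
    have hmono : Monotone (ℓ ∘ ⇑π₀) := Tuple.monotone_sort ℓ
    have hinj0 : Function.Injective (ℓ ∘ ⇑π₀) := hinj.comp π₀.injective
    have hsm : StrictMono (ℓ ∘ ⇑π₀) := hmono.strictMono_of_injective hinj0
    have hl0 : ℓ = (ℓ ∘ ⇑π₀) ∘ ⇑π₀⁻¹ := by
      funext x
      rw [Function.comp_apply, Function.comp_apply, ← Equiv.Perm.mul_apply, mul_inv_cancel,
        Equiv.Perm.one_apply]
    set u₀ : {u : Fin N → Fin K // StrictMono u} := ⟨ℓ ∘ ⇑π₀, hsm⟩ with hu₀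
    rw [Finset.sum_eq_single u₀]
    · unfold basisTensor
      rw [Finset.mul_sum, Finset.sum_eq_single π₀⁻¹]
      · rw [if_pos hl0]
        have h2 := hX π₀⁻¹ (ℓ ∘ ⇑π₀)
        rw [← hl0] at h2
        rw [h2]; ring
      · intro π _ hπ
        rw [if_neg, mul_zero]
        intro hl
        apply hπ
        have : ⇑π = ⇑π₀⁻¹ := by
          funext x
          apply hinj0
          have e1 := congrFun hl x
          have e2 := congrFun hl0 x
          exact e1.symm.trans e2
        exact Equiv.coe_fn_injective this
      · intro h; exact absurd (Finset.mem_univ _) h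
    · intro u _ hu
      have hz : basisTensor u.1 ℓ = 0 := by
        unfold basisTensor
        apply Finset.sum_eq_zero
        intro π _
        rw [if_neg]
        intro hl
        apply hu
        have hr : Set.range u.1 = Set.range (ℓ ∘ ⇑π₀) := by
          have r1 : Set.range (u.1 ∘ ⇑π) = Set.range u.1 := by
            rw [Set.range_comp, Set.range_eq_univ.2 π.surjective, Set.image_univ]
          have r2 : Set.range (ℓ ∘ ⇑π₀) = Set.range ℓ := by
            rw [Set.range_comp, Set.range_eq_univ.2 π₀.surjective, Set.image_univ]
          rw [← r1, ← hl, r2]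
        haveI : WellFoundedLT (Fin N) := inferInstance
        exact Subtype.ext ((u.2.range_inj hsm).1 hr)
      rw [hz, mul_zero]
    · intro h; exact absurd (Finset.mem_univ _) h
  · rw [X_eq_zero_of_not_injective hX hinj]
    symm
    apply Finset.sum_eq_zero
    intro u _
    have hz : basisTensor u.1 ℓ = 0 := by
      unfold basisTensor
      apply Finset.sum_eq_zero
      intro π _
      rw [if_neg]
      intro hl
      exact hinj (hl ▸ (u.2.injective.comp π.injective))
    rw [hz, mul_zero]

lemma card_strictMono_le {N K : ℕ} :
    Fintype.card {u : Fin N → Fin K // StrictMono u} ≤ K.choose N := by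
  have hcard : ∀ u : {u : Fin N → Fin K // StrictMono u},
      (Finset.image u.1 Finset.univ).card = N := fun u => by
    rw [Finset.card_image_of_injective _ u.2.injective, Finset.card_univ, Fintype.card_fin]
  have hf : Function.Injective
      (fun u : {u : Fin N → Fin K // StrictMono u} =>
        (⟨Finset.image u.1 Finset.univ, hcard u⟩ : {s : Finset (Fin K) // s.card = N})) := by
    intro u v huv
    have hsets : Finset.image u.1 Finset.univ = Finset.image v.1 Finset.univ :=
      congrArg Subtype.val huv
    have hr : Set.range u.1 = Set.range v.1 := by
      rw [← Set.image_univ, ← Finset.coe_univ, ← Finset.coe_image, hsets,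
        Finset.coe_image, Finset.coe_univ, Set.image_univ]
    haveI : WellFoundedLT (Fin N) := inferInstance
    have h2 := (u.2.range_inj v.2).1 hr
    exact Subtype.ext h2
  calc Fintype.card {u : Fin N → Fin K // StrictMono u}
      ≤ Fintype.card {s : Finset (Fin K) // s.card = N} := Fintype.card_le_of_injective _ hf
    _ = K.choose N := by rw [card_subtype_card, Fintype.card_fin]


end CPAux

theorem cpRank_antisym_upper_bound {N K : ℕ} (hN : 1 ≤ N) (hKN : N ≤ K)
    (X : (Fin N → Fin K) → ℂ) (hX : IsAntisymTensor X) :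
    (cpRank X : ℝ) ≤ (N.factorial : ℝ) * (K.choose N : ℝ) * (5 / 6 : ℝ) ^ (N / 3) := by
  classical
  obtain ⟨p, hp, hple⟩ := CPAux.det_decomp N
  have h1 : ∀ u : {u : Fin N → Fin K // StrictMono u},
      CPAux.HasDecomp (Fin p) (fun ℓ => X u.1 * basisTensor u.1 ℓ) :=
    fun u => (CPAux.hasDecomp_basisTensor u.2.injective hp).smul hN (X u.1)
  have h2 := (CPAux.hasDecomp_sum h1).congr (CPAux.antisym_expand hX)
  have h3 := CPAux.cpRank_le h2
  have hcard : Fintype.card ((_ : {u : Fin N → Fin K // StrictMono u}) × Fin p)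
      = Fintype.card {u : Fin N → Fin K // StrictMono u} * p := by
    rw [Fintype.card_sigma]
    rw [Finset.sum_const, smul_eq_mul, Finset.card_univ, Fintype.card_fin]
  have h4 : cpRank X ≤ K.choose N * p := by
    refine h3.trans ?_
    rw [hcard]
    exact Nat.mul_le_mul_right p CPAux.card_strictMono_le
  have h5 : (cpRank X : ℝ) ≤ (K.choose N : ℝ) * (p : ℝ) := by
    exact_mod_cast Nat.cast_le.2 h4
  calc (cpRank X : ℝ) ≤ (K.choose N : ℝ) * (p : ℝ) := h5
    _ ≤ (K.choose N : ℝ) * ((N.factorial : ℝ) * (5/6 : ℝ) ^ (N / 3)) := by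
        apply mul_le_mul_of_nonneg_left hple (by positivity)
    _ = (N.factorial : ℝ) * (K.choose N : ℝ) * (5 / 6 : ℝ) ^ (N / 3) := by ring
end

section
/- Let K ≥ N ≥ 1 be natural numbers and let X be a nonzero antisymmetric N-th order tensor of dimension K over ℂ. Then rank_cp(X) ≥ rank_cp(E), where E is the determinant tensor of order N and dimension N. -/
/-
A nonzero antisymmetric tensor `X` takes a nonzero value `X u` at some index tuple `u`, and
antisymmetry forces `X (u ∘ ℓ) = E ℓ * X u` for every `ℓ : Fin N → Fin N`. Hence `E` is obtained
from `X` by restricting every factor vector along `u` and rescaling one factor by `(X u)⁻¹`;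
neither operation increases the number of rank-one terms.
-/

open scoped BigOperators

namespace IsAntisymTensor

variable {N K : ℕ} {X : (Fin N → Fin K) → ℂ}

theorem apply_eq_zero_of_not_injective (hX : IsAntisymTensor X) {k : Fin N → Fin K}
    (hk : ¬ Function.Injective k) : X k = 0 := by
  obtain ⟨a, b, hab, hne⟩ := Function.not_injective_iff.mp hk
  have hswap : k ∘ Equiv.swap a b = k := by
    funext m
    simp only [Function.comp_apply, Equiv.swap_apply_def]
    split_ifs with hma hmb <;> simp_all
  have h := hX (Equiv.swap a b) k
  rw [hswap, Equiv.Perm.sign_swap hne] at h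
  push_cast at h
  linear_combination h / 2

theorem apply_comp (hX : IsAntisymTensor X) (u : Fin N → Fin K) (ℓ : Fin N → Fin N) :
    X (u ∘ ℓ) = detTensor N ℓ * X u := by
  by_cases hℓ : Function.Injective ℓ
  · set π := Equiv.ofBijective ℓ (Finite.injective_iff_bijective.mp hℓ)
    have hdet : detTensor N π = Equiv.Perm.sign π := by
      simp [detTensor, Equiv.coe_fn_injective.eq_iff]
    exact (hX π u).trans (by rw [← hdet]; rfl)
  · have hdet : detTensor N ℓ = 0 :=
      Finset.sum_eq_zero fun σ _ => if_neg fun h => hℓ (by rw [h]; exact σ.injective)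
    rw [hdet, zero_mul]
    exact hX.apply_eq_zero_of_not_injective fun h => hℓ h.of_comp

end IsAntisymTensor

section cpRank

variable {N K : ℕ}

theorem cpRank_le {X : (Fin N → Fin K) → ℂ} {p : ℕ} (x : Fin p → Fin N → Fin K → ℂ)
    (hx : ∀ k, X k = ∑ i, ∏ j, x i j (k j)) : cpRank X ≤ p :=
  Nat.sInf_le ⟨x, hx⟩

theorem exists_sum_prod_fin_card {ι : Type*} [Fintype ι] {X : (Fin N → Fin K) → ℂ}
    (x : ι → Fin N → Fin K → ℂ) (hx : ∀ k, X k = ∑ i, ∏ j, x i j (k j)) :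
    ∃ y : Fin (Fintype.card ι) → Fin N → Fin K → ℂ, ∀ k, X k = ∑ i, ∏ j, y i j (k j) :=
  ⟨x ∘ (Fintype.equivFin ι).symm, fun k => by
    rw [hx k, ← Equiv.sum_comp (Fintype.equivFin ι).symm]
    rfl⟩

-- The coefficient `X k'` of the standard-basis expansion sits in the factor at index `0`. For
-- `N = 0` there is no factor: a scalar tensor has a CP decomposition only if it is a natural number.
theorem cpRank_spec (hN : 0 < N) (X : (Fin N → Fin K) → ℂ) :
    ∃ x : Fin (cpRank X) → Fin N → Fin K → ℂ, ∀ k, X k = ∑ i, ∏ j, x i j (k j) := by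
  suffices h : ∃ p, ∃ x : Fin p → Fin N → Fin K → ℂ, ∀ k, X k = ∑ i, ∏ j, x i j (k j) from
    Nat.sInf_mem h
  refine ⟨_, exists_sum_prod_fin_card (fun k' j m =>
    (if j = ⟨0, hN⟩ then X k' else 1) * if m = k' j then 1 else 0) fun k => ?_⟩
  have hterm (k' : Fin N → Fin K) : ∏ j, (if j = ⟨0, hN⟩ then X k' else 1) *
      (if k j = k' j then 1 else 0) = if k = k' then X k' else 0 := by
    rw [Finset.prod_mul_distrib, Finset.prod_ite_eq', Finset.prod_boole]
    simp [funext_iff]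
  simp only [hterm, Finset.sum_ite_eq, Finset.mem_univ, if_true]

theorem cpRank_smul_le (hN : 0 < N) (c : ℂ) (X : (Fin N → Fin K) → ℂ) :
    cpRank (c • X) ≤ cpRank X := by
  obtain ⟨x, hx⟩ := cpRank_spec hN X
  refine cpRank_le (fun i j m => (if j = ⟨0, hN⟩ then c else 1) * x i j m) fun k => ?_
  simp only [Pi.smul_apply, smul_eq_mul, hx k, Finset.mul_sum, Finset.prod_mul_distrib,
    Finset.prod_ite_eq', Finset.mem_univ, if_true]

theorem cpRank_comp_le {K' : ℕ} (hN : 0 < N) (u : Fin K' → Fin K) (X : (Fin N → Fin K) → ℂ) :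
    cpRank (fun ℓ : Fin N → Fin K' => X (u ∘ ℓ)) ≤ cpRank X := by
  obtain ⟨x, hx⟩ := cpRank_spec hN X
  exact cpRank_le (fun i j m => x i j (u m)) fun ℓ => hx (u ∘ ℓ)

end cpRank

theorem cpRank_antisym_ge_cpRank_detTensor_general {N K : ℕ} (hN : 1 ≤ N)
    (X : (Fin N → Fin K) → ℂ) (hX : IsAntisymTensor X) (hX0 : X ≠ 0) :
    cpRank (detTensor N) ≤ cpRank X := by
  obtain ⟨u, hu⟩ := Function.ne_iff.mp hX0
  have hE : detTensor N = (X u)⁻¹ • fun ℓ => X (u ∘ ℓ) := by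
    funext ℓ
    rw [Pi.smul_apply, hX.apply_comp u ℓ, smul_eq_mul, mul_comm, mul_inv_cancel_right₀ hu]
  rw [hE]
  exact (cpRank_smul_le hN _ _).trans (cpRank_comp_le hN u X)

theorem cpRank_antisym_ge_cpRank_detTensor {N K : ℕ} (hN : 1 ≤ N) (hKN : N ≤ K)
    (X : (Fin N → Fin K) → ℂ) (hX : IsAntisymTensor X) (hX0 : X ≠ 0) :
    cpRank (detTensor N) ≤ cpRank X :=
  cpRank_antisym_ge_cpRank_detTensor_general hN X hX hX0
end

section
/- Let Ω be a type, K ≥ N ≥ 1 natural numbers, and φ : Fin K → (Ω → ℂ) a linearly independent family of functions. Suppose f : (Fin N → Ω) → ℂ is antisymmetric, not identically zero, and there exist p ∈ ℕ and functions ψ : Fin p → Fin N → (Ω → ℂ) with each ψ(i)(j) in the ℂ-span of {φ_1, …, φ_K} such that f(r) = ∑_{i=1}^p ∏_j ψ(i)(j)(r(j)) for all r. Then p ≥ binom(N, ⌊N/2⌋). -/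
open scoped BigOperators

lemma aux_li_prod {Ω : Type*} [Nonempty Ω] {K : ℕ} (φ : Fin K → Ω → ℂ)
    (hφ : LinearIndependent ℂ φ) :
    ∀ (N : ℕ) (c : (Fin N → Fin K) → ℂ),
      (∀ r : Fin N → Ω, ∑ k : Fin N → Fin K, c k * ∏ j, φ (k j) (r j) = 0) → c = 0 := by
  intro N
  induction N with
  | zero =>
    intro c h
    funext k
    have h0 := h (fun j => j.elim0)
    rw [show k = (fun j => j.elim0) from funext fun j => j.elim0]
    simpa [Subsingleton.elim (fun j : Fin 0 => j.elim0) (default : Fin 0 → Fin K)] using h0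
  | succ n ih =>
    intro c h
    have key : ∀ (r : Fin n → Ω) (a : Fin K),
        ∑ k : Fin n → Fin K, c (Fin.cons a k) * ∏ j, φ (k j) (r j) = 0 := by
      intro r a
      set d : Fin K → ℂ :=
        fun b => ∑ k : Fin n → Fin K, c (Fin.cons b k) * ∏ j, φ (k j) (r j) with hd_def
      have hd : ∀ ω : Ω, ∑ b, d b * φ b ω = 0 := by
        intro ω
        have h0 := h (Fin.cons ω r)
        have hsplit : ∑ k : Fin (n+1) → Fin K, c k * ∏ j, φ (k j) ((Fin.cons ω r : Fin (n+1) → Ω) j)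
            = ∑ b : Fin K, ∑ k : Fin n → Fin K,
                c (Fin.cons b k) * (φ b ω * ∏ j, φ (k j) (r j)) := by
          rw [show (∑ b : Fin K, ∑ k : Fin n → Fin K,
                c (Fin.cons b k) * (φ b ω * ∏ j, φ (k j) (r j)))
              = ∑ bk : Fin K × (Fin n → Fin K),
                c (Fin.cons bk.1 bk.2) * (φ bk.1 ω * ∏ j, φ (bk.2 j) (r j))
            from (Fintype.sum_prod_type' (f := fun b k =>
                c (Fin.cons b k) * (φ b ω * ∏ j, φ (k j) (r j)))).symm]
          apply Fintype.sum_equiv (Fin.consEquiv (fun _ : Fin (n+1) => Fin K)).symm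
          intro k
          simp [Fin.prod_univ_succ, Fin.tail, Fin.cons_self_tail]
        rw [hsplit] at h0
        rw [← h0]
        apply Finset.sum_congr rfl
        intro b _
        rw [hd_def, Finset.sum_mul]
        apply Finset.sum_congr rfl
        intro k _
        ring
      have hlin := Fintype.linearIndependent_iff.mp hφ d
        (by funext ω; simpa [Finset.sum_apply] using hd ω)
      exact hlin a
    funext k
    have := congrFun (ih (fun k' => c (Fin.cons (k 0) k')) (fun r => key r (k 0))) (Fin.tail k)
    simpa [Fin.cons_self_tail] using this

theorem tpf_rank_exponential_lower_bound {Ω : Type*} {K N : ℕ} (hN : 1 ≤ N) (hKN : N ≤ K)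
    (φ : Fin K → Ω → ℂ) (hφ : LinearIndependent ℂ φ)
    (f : (Fin N → Ω) → ℂ) (hanti : IsAntisymFun f) (hf0 : f ≠ 0)
    {p : ℕ} (ψ : Fin p → Fin N → Ω → ℂ)
    (hspan : ∀ i j, ψ i j ∈ Submodule.span ℂ (Set.range φ))
    (hrep : ∀ r : Fin N → Ω, f r = ∑ i, ∏ j, ψ i j (r j)) :
    N.choose (N / 2) ≤ p := by
  classical
  -- Ω is nonempty
  have hΩ : Nonempty Ω := by
    by_contra hΩ
    rw [not_nonempty_iff] at hΩ
    have : (Fin K) → False := fun a => by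
      have h1 : φ a = 0 := funext fun ω => (hΩ.false ω).elim
      exact hφ.ne_zero a h1
    exact this ⟨0, lt_of_lt_of_le hN hKN⟩
  -- extract coefficients
  have hx' : ∀ i j, ∃ c : Fin K → ℂ, ∑ a, c a • φ a = ψ i j := by
    intro i j
    exact (Submodule.mem_span_range_iff_exists_fun ℂ).mp (hspan i j)
  choose x hx using hx'
  have hψ : ∀ i j ω, ψ i j ω = ∑ a, x i j a * φ a ω := by
    intro i j ω
    rw [← hx i j]
    simp [Finset.sum_apply]
  set X : (Fin N → Fin K) → ℂ := fun k => ∑ i, ∏ j, x i j (k j) with hX_def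
  set G : (Fin N → Fin K) → (Fin N → Ω) → ℂ :=
    fun k r => ∏ j, φ (k j) (r j) with hG_def
  -- representation of f through X
  have hX : ∀ r : Fin N → Ω, f r = ∑ k : Fin N → Fin K, X k * G k r := by
    intro r
    rw [hrep]
    have hprod : ∀ i, ∏ j, ψ i j (r j)
        = ∑ k : Fin N → Fin K, ∏ j, (x i j (k j) * φ (k j) (r j)) := by
      intro i
      simp_rw [hψ]
      rw [Finset.prod_univ_sum]
      rw [Fintype.piFinset_univ]
    simp_rw [hprod]
    rw [Finset.sum_comm]
    apply Finset.sum_congr rfl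
    intro k _
    rw [hX_def, hG_def, Finset.sum_mul]
    apply Finset.sum_congr rfl
    intro i _
    rw [← Finset.prod_mul_distrib]
  -- X is antisymmetric
  have hXa : ∀ (π : Equiv.Perm (Fin N)) (k : Fin N → Fin K),
      X (k ∘ π) = ((Equiv.Perm.sign π : ℤ) : ℂ) * X k := by
    intro π
    have h0 : ∀ r : Fin N → Ω,
        ∑ k : Fin N → Fin K,
          (X (k ∘ π) - ((Equiv.Perm.sign π : ℤ) : ℂ) * X k) * G k r = 0 := by
      intro r
      have h1 : f (r ∘ π) = ∑ k : Fin N → Fin K, X (k ∘ π) * G k r := by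
        rw [hX (r ∘ π)]
        have e : (Fin N → Fin K) ≃ (Fin N → Fin K) :=
          Equiv.arrowCongr π.symm (Equiv.refl _)
        rw [← Equiv.sum_comp (Equiv.arrowCongr π.symm (Equiv.refl (Fin K)))
          (fun k => X k * G k (r ∘ π))]
        apply Finset.sum_congr rfl
        intro k _
        have hek : (Equiv.arrowCongr π.symm (Equiv.refl (Fin K))) k = k ∘ π := by
          funext j; simp [Equiv.arrowCongr]
        rw [hek]
        congr 1
        rw [hG_def]
        simp only
        rw [← Equiv.prod_comp π (fun j => φ (k j) (r j))]
        apply Finset.prod_congr rfl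
        intro j _
        simp
      have h2 : f (r ∘ π) = ∑ k : Fin N → Fin K,
          (((Equiv.Perm.sign π : ℤ) : ℂ) * X k) * G k r := by
        rw [hanti π r, hX r, Finset.mul_sum]
        apply Finset.sum_congr rfl
        intro k _
        ring
      simp only [sub_mul, Finset.sum_sub_distrib]
      rw [← h1, ← h2, sub_self]
    have := aux_li_prod φ hφ N _ h0
    intro k
    have := congrFun this k
    simpa [sub_eq_zero] using this
  -- X is supported on injective tuples
  have hsupp : ∀ k : Fin N → Fin K, ¬ Function.Injective k → X k = 0 := by
    intro k hk
    obtain ⟨a, b, hab, hne⟩ := Function.not_injective_iff.mp hk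
    have h1 : k ∘ (Equiv.swap a b) = k := by
      funext j
      rcases eq_or_ne j a with rfl | hja
      · simp [hab.symm]
      · rcases eq_or_ne j b with rfl | hjb
        · simp [hab]
        · simp [Equiv.swap_apply_of_ne_of_ne hja hjb]
    have h2 := hXa (Equiv.swap a b) k
    rw [h1, Equiv.Perm.sign_swap hne] at h2
    have : X k = - X k := by simpa using h2
    linear_combination this / 2
  -- a nonzero injective entry
  have hex : ∃ u : Fin N → Fin K, X u ≠ 0 := by
    by_contra h
    push_neg at h
    apply hf0
    funext r
    rw [hX r]
    simp [h]
  obtain ⟨u, hu⟩ := hex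
  have huinj : Function.Injective u := by
    by_contra h
    exact hu (hsupp u h)
  -- the combinatorial setup
  set m : ℕ := N / 2 with hm_def
  set q : ℕ := N - m with hq_def
  have hmq : m + q = N := by omega
  set e : Fin m ⊕ Fin q ≃ Fin N := finSumFinEquiv.trans (finCongr hmq) with he_def
  have hTc : ∀ T : {s : Finset (Fin N) // s.card = m}, (T.1ᶜ).card = q := by
    intro T
    rw [Finset.card_compl, T.2, Fintype.card_fin]
  set aT : {s : Finset (Fin N) // s.card = m} → Fin m → Fin N := fun T j => ((T.1.orderIsoOfFin T.2) j : Fin N) with haT_def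
  set bT : {s : Finset (Fin N) // s.card = m} → Fin q → Fin N := fun T j => (((T.1ᶜ).orderIsoOfFin (hTc T)) j : Fin N) with hbT_def
  have haT_mem : ∀ T j, aT T j ∈ T.1 := fun T j => ((T.1.orderIsoOfFin T.2) j).2
  have hbT_mem : ∀ T j, bT T j ∈ T.1ᶜ := fun T j => (((T.1ᶜ).orderIsoOfFin (hTc T)) j).2
  have haT_inj : ∀ T, Function.Injective (aT T) := by
    intro T j j' h
    exact (T.1.orderIsoOfFin T.2).injective (Subtype.ext h)
  have hbT_inj : ∀ T, Function.Injective (bT T) := by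
    intro T j j' h
    exact ((T.1ᶜ).orderIsoOfFin (hTc T)).injective (Subtype.ext h)
  set kk : {s : Finset (Fin N) // s.card = m} → {s : Finset (Fin N) // s.card = m} → Fin N → Fin K :=
    fun T T' j => Sum.elim (fun i => u (aT T i)) (fun i => u (bT T' i)) (e.symm j) with hkk_def
  have hkk_l : ∀ T T' i, kk T T' (e (Sum.inl i)) = u (aT T i) := by
    intro T T' i; simp [hkk_def]
  have hkk_r : ∀ T T' i, kk T T' (e (Sum.inr i)) = u (bT T' i) := by
    intro T T' i; simp [hkk_def]
  set v : {s : Finset (Fin N) // s.card = m} → Fin p → ℂ :=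
    fun T i => ∏ a : Fin m, x i (e (Sum.inl a)) (u (aT T a)) with hv_def
  set w : {s : Finset (Fin N) // s.card = m} → Fin p → ℂ :=
    fun T i => ∏ b : Fin q, x i (e (Sum.inr b)) (u (bT T b)) with hw_def
  have hvw : ∀ T T', ∑ i, v T i * w T' i = X (kk T T') := by
    intro T T'
    rw [hX_def]
    simp only
    apply Finset.sum_congr rfl
    intro i _
    rw [← Equiv.prod_comp e (fun j => x i j (kk T T' j)), Fintype.prod_sum_type]
    simp only [hkk_l, hkk_r, hv_def, hw_def]
  -- off-diagonal vanishing
  have hoff : ∀ T T' : {s : Finset (Fin N) // s.card = m}, T ≠ T' → X (kk T T') = 0 := by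
    intro T T' hTT'
    have hsub : ¬ T.1 ⊆ T'.1 := by
      intro hs
      exact hTT' (Subtype.ext (Finset.eq_of_subset_of_card_le hs (by rw [T.2, T'.2])))
    obtain ⟨t, ht, ht'⟩ := Finset.not_subset.mp hsub
    apply hsupp
    intro hinj
    set j₁ := (T.1.orderIsoOfFin T.2).symm ⟨t, ht⟩ with hj₁
    set j₂ := ((T'.1ᶜ).orderIsoOfFin (hTc T')).symm ⟨t, Finset.mem_compl.mpr ht'⟩ with hj₂
    have h1 : kk T T' (e (Sum.inl j₁)) = u t := by
      rw [hkk_l]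
      congr 1
      rw [haT_def]
      simp [hj₁]
    have h2 : kk T T' (e (Sum.inr j₂)) = u t := by
      rw [hkk_r]
      congr 1
      rw [hbT_def]
      simp [hj₂]
    have := hinj (h1.trans h2.symm)
    have := e.injective this
    simp at this
  -- diagonal nonvanishing
  have hdiag : ∀ T : {s : Finset (Fin N) // s.card = m}, X (kk T T) ≠ 0 := by
    intro T
    set σ : Fin N → Fin N := fun j => Sum.elim (aT T) (bT T) (e.symm j) with hσ_def
    have hσinj : Function.Injective σ := by
      intro j j' hjj
      rw [hσ_def] at hjj
      simp only at hjj
      have : e.symm j = e.symm j' := by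
        rcases h1 : e.symm j with a | b <;> rcases h2 : e.symm j' with a' | b' <;>
          rw [h1, h2] at hjj <;> simp only [Sum.elim_inl, Sum.elim_inr] at hjj
        · rw [haT_inj T hjj]
        · exact absurd (hjj ▸ haT_mem T a) (Finset.mem_compl.mp (hbT_mem T b'))
        · exact absurd (haT_mem T a') (Finset.mem_compl.mp (hjj ▸ hbT_mem T b))
        · rw [hbT_inj T hjj]
      exact e.symm.injective this
    have hσbij : Function.Bijective σ := Finite.injective_iff_bijective.mp hσinj
    set π := Equiv.ofBijective σ hσbij with hπ
    have hcomp : kk T T = u ∘ π := by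
      funext j
      have : (π : Fin N → Fin N) j = σ j := rfl
      rw [Function.comp_apply, this, hkk_def, hσ_def]
      simp only
      rcases h1 : e.symm j with a | b <;> simp
    rw [hcomp, hXa π u]
    rcases Int.units_eq_one_or (Equiv.Perm.sign π) with h | h <;>
      simp [h, hu]
  -- linear independence of the v's
  have hli : LinearIndependent ℂ v := by
    rw [Fintype.linearIndependent_iff]
    intro c hc T₀
    have h0 : ∑ i, (∑ T, c T • v T) i * w T₀ i = 0 := by
      rw [hc]; simp
    have h1 : ∑ T, c T * X (kk T T₀) = 0 := by
      rw [← h0]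
      simp only [Finset.sum_apply, Pi.smul_apply, smul_eq_mul, Finset.sum_mul]
      rw [Finset.sum_comm]
      apply Finset.sum_congr rfl
      intro T _
      rw [← hvw T T₀, Finset.mul_sum]
      apply Finset.sum_congr rfl
      intro i _
      ring
    rw [Finset.sum_eq_single T₀ (fun T _ hT => by rw [hoff T T₀ hT, mul_zero])
      (fun h => absurd (Finset.mem_univ T₀) h)] at h1
    exact (mul_eq_zero.mp h1).resolve_right (hdiag T₀)
  -- conclude
  have hcard := hli.fintype_card_le_finrank
  rw [Module.finrank_fin_fun] at hcard
  calc N.choose m = Fintype.card {s : Finset (Fin N) // s.card = m} := by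
        simpa using (Fintype.card_finset_len (α := Fin N) m).symm
    _ ≤ p := hcard
end

section
/- Let N ≥ 1, d ≥ 1, m ≥ 1, p ∈ ℕ, let σ : ℂ → ℂ be any function (the activation), and let a : Fin p → Fin N → Fin d → Fin m → ℂ, c : Fin p → Fin N → Fin d → ℂ, ω : Fin N → Fin d → Fin m → ℂ, b : Fin N → Fin d → Fin m → ℂ be parameters. Define the tensor neural network f : (Fin N → Fin d → ℝ) → ℂ by f(r) = ∑_{i=1}^p ∏_{j=1}^N ∏_{k=1}^d ( ∑_{ℓ=1}^m a(i)(j)(k)(ℓ) · σ(ω(j)(k)(ℓ) · r(j)(k) + b(j)(k)(ℓ)) + c(i)(j)(k) ). If f is antisymmetric, i.e., f(r ∘ π) = sgn(π) · f(r) for every permutation π of Fin N and every r, and f is not identically zero, then p ≥ binom(N, ⌊N/2⌋). -/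
open scoped BigOperators

open scoped BigOperators

/-- Key combinatorial/linear-algebra lemma: if an antisymmetric-looking tensor
`X` on `(Fin N → Fin N)` admits a rank-`p` decomposition and `X id ≠ 0`,
then `p ≥ N.choose (N/2)`. -/
lemma antisym_tensor_rank_aux {N p : ℕ} (x : Fin p → Fin N → Fin N → ℂ)
    (X : (Fin N → Fin N) → ℂ)
    (hX : ∀ ℓ, X ℓ = ∑ i, ∏ j, x i j (ℓ j))
    (hanti : ∀ (π : Equiv.Perm (Fin N)) (ℓ : Fin N → Fin N),
      X (ℓ ∘ ⇑π) = ((Equiv.Perm.sign π : ℤ) : ℂ) * X ℓ)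
    (h0 : X id ≠ 0) : N.choose (N / 2) ≤ p := by
  classical
  set h2 := N / 2 with hh2
  have hle : h2 ≤ N := Nat.div_le_self N 2
  have hsum : h2 + (N - h2) = N := Nat.add_sub_cancel' hle
  set g := N - h2 with hg
  set join : (Fin h2 → Fin N) → (Fin g → Fin N) → Fin N → Fin N :=
    fun t s j => Fin.append t s (Fin.cast hsum.symm j) with hjoin
  have hjl : ∀ t s j, join t s (Fin.cast hsum (Fin.castAdd g j)) = t j := by
    intro t s j
    have h1 : Fin.cast hsum.symm (Fin.cast hsum (Fin.castAdd g j)) = Fin.castAdd g j := by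
      ext; simp
    simp [hjoin, h1, Fin.append_left]
  have hjr : ∀ t s j, join t s (Fin.cast hsum (Fin.natAdd h2 j)) = s j := by
    intro t s j
    have h1 : Fin.cast hsum.symm (Fin.cast hsum (Fin.natAdd h2 j)) = Fin.natAdd h2 j := by
      ext; simp
    simp [hjoin, h1, Fin.append_right]
  -- value of X on non-injective tuples
  have hX0 : ∀ ℓ : Fin N → Fin N, ¬ Function.Injective ℓ → X ℓ = 0 := by
    intro ℓ hinj
    rw [Function.not_injective_iff] at hinj
    obtain ⟨i, j, hval, hne⟩ := hinj
    have hcomp : ℓ ∘ ⇑(Equiv.swap i j) = ℓ := by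
      funext k
      rcases eq_or_ne k i with rfl | hki
      · simp [Equiv.swap_apply_left, hval]
      rcases eq_or_ne k j with rfl | hkj
      · simp [Equiv.swap_apply_right, hval]
      · simp [Equiv.swap_apply_of_ne_of_ne hki hkj]
    have hs := hanti (Equiv.swap i j) ℓ
    rw [hcomp, Equiv.Perm.sign_swap hne] at hs
    push_cast at hs
    linear_combination hs / 2
  -- value of X on permutations
  have hXperm : ∀ π : Equiv.Perm (Fin N), X ⇑π = ((Equiv.Perm.sign π : ℤ) : ℂ) * X id := by
    intro π
    simpa [Function.id_comp] using hanti π id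
  -- the flattening matrix and its factorization
  set ρ : {S : Finset (Fin N) // S.card = h2} → Fin h2 → Fin N :=
    fun S => ⇑(S.1.orderEmbOfFin S.2) with hρ
  set κ : {S : Finset (Fin N) // S.card = g} → Fin g → Fin N :=
    fun S => ⇑(S.1.orderEmbOfFin S.2) with hκ
  set A : Matrix {S : Finset (Fin N) // S.card = h2} (Fin p) ℂ :=
    fun S i => ∏ j, x i (Fin.cast hsum (Fin.castAdd g j)) (ρ S j) with hA
  set B : Matrix (Fin p) {S : Finset (Fin N) // S.card = g} ℂ :=
    fun i T => ∏ j, x i (Fin.cast hsum (Fin.natAdd h2 j)) (κ T j) with hB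
  set M : Matrix {S : Finset (Fin N) // S.card = h2} {S : Finset (Fin N) // S.card = g} ℂ :=
    fun S T => X (join (ρ S) (κ T)) with hMdef
  have hM : M = A * B := by
    ext S T
    rw [Matrix.mul_apply]
    rw [show M S T = X (join (ρ S) (κ T)) from rfl, hX]
    refine Finset.sum_congr rfl fun i _ => ?_
    calc ∏ j, x i j (join (ρ S) (κ T) j)
        = ∏ j' : Fin (h2 + g),
            x i (Fin.cast hsum j') (join (ρ S) (κ T) (Fin.cast hsum j')) :=
          (Fintype.prod_equiv (finCongr hsum) _ _ (fun j' => rfl)).symm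
      _ = (∏ j, x i (Fin.cast hsum (Fin.castAdd g j)) (join (ρ S) (κ T) (Fin.cast hsum (Fin.castAdd g j))))
          * ∏ j, x i (Fin.cast hsum (Fin.natAdd h2 j)) (join (ρ S) (κ T) (Fin.cast hsum (Fin.natAdd h2 j))) :=
          Fin.prod_univ_add _
      _ = A S i * B i T := by
          simp only [hjl, hjr]
          rfl
  -- rank upper bound
  have hup : M.rank ≤ p := by
    rw [hM]
    exact le_trans (Matrix.rank_mul_le_left A B)
      (le_trans (Matrix.rank_le_card_width A) (le_of_eq (Fintype.card_fin p)))
  -- complement map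
  have hcompl : ∀ S : {S : Finset (Fin N) // S.card = h2}, (S.1ᶜ).card = g := by
    intro S
    rw [Finset.card_compl, S.2]
    simp [hg]
  set Q : Matrix {S : Finset (Fin N) // S.card = g} {S : Finset (Fin N) // S.card = h2} ℂ :=
    fun T S => if T.1 = S.1ᶜ then 1 else 0 with hQ
  set dg : {S : Finset (Fin N) // S.card = h2} → ℂ :=
    fun S => M S ⟨S.1ᶜ, hcompl S⟩ with hdgdef
  -- representation of indices
  have hrep : ∀ i : Fin N, (∃ j, i = Fin.cast hsum (Fin.castAdd g j)) ∨
      (∃ j, i = Fin.cast hsum (Fin.natAdd h2 j)) := by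
    intro i
    rcases lt_or_ge i.val h2 with hlt | hge
    · exact Or.inl ⟨⟨i.val, hlt⟩, by ext; simp⟩
    · have hiv : i.val - h2 < g := by omega
      exact Or.inr ⟨⟨i.val - h2, hiv⟩, by ext; simp; omega⟩
  -- off-diagonal entries vanish
  have hoff : ∀ S S' : {S : Finset (Fin N) // S.card = h2}, S ≠ S' →
      M S ⟨S'.1ᶜ, hcompl S'⟩ = 0 := by
    intro S S' hne
    have hnsub : ¬ S.1 ⊆ S'.1 := by
      intro hsub
      exact hne (Subtype.ext (Finset.eq_of_subset_of_card_le hsub (by rw [S.2, S'.2])))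
    obtain ⟨a, haS, haS'⟩ := Finset.not_subset.mp hnsub
    have haC : a ∈ S'.1ᶜ := Finset.mem_compl.mpr haS'
    have h1 : a ∈ Set.range (ρ S) := by
      rw [hρ, Finset.range_orderEmbOfFin]; exact haS
    have h2' : a ∈ Set.range (κ ⟨S'.1ᶜ, hcompl S'⟩) := by
      rw [hκ, Finset.range_orderEmbOfFin]; exact haC
    obtain ⟨j, hj⟩ := h1
    obtain ⟨j', hj'⟩ := h2'
    refine hX0 _ (fun hinj => ?_)
    have e1 : join (ρ S) (κ ⟨S'.1ᶜ, hcompl S'⟩) (Fin.cast hsum (Fin.castAdd g j)) = a := by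
      rw [hjl]; exact hj
    have e2 : join (ρ S) (κ ⟨S'.1ᶜ, hcompl S'⟩) (Fin.cast hsum (Fin.natAdd h2 j')) = a := by
      rw [hjr]; exact hj'
    have := hinj (e1.trans e2.symm)
    have hv := congrArg Fin.val this
    simp at hv
    omega
  -- diagonal entries are nonzero
  have hdg : ∀ S, dg S ≠ 0 := by
    intro S
    have hinj : Function.Injective (join (ρ S) (κ ⟨S.1ᶜ, hcompl S⟩)) := by
      intro i i' heq
      rcases hrep i with ⟨j, rfl⟩ | ⟨j, rfl⟩ <;> rcases hrep i' with ⟨j', rfl⟩ | ⟨j', rfl⟩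
      · rw [hjl, hjl] at heq
        have := (S.1.orderEmbOfFin S.2).injective heq
        rw [this]
      · rw [hjl, hjr] at heq
        have hm1 : ρ S j ∈ S.1 := Finset.orderEmbOfFin_mem _ _ _
        have hm2 : κ ⟨S.1ᶜ, hcompl S⟩ j' ∈ S.1ᶜ := Finset.orderEmbOfFin_mem _ _ _
        rw [heq] at hm1
        exact absurd hm1 (Finset.mem_compl.mp hm2)
      · rw [hjr, hjl] at heq
        have hm1 : ρ S j' ∈ S.1 := Finset.orderEmbOfFin_mem _ _ _
        have hm2 : κ ⟨S.1ᶜ, hcompl S⟩ j ∈ S.1ᶜ := Finset.orderEmbOfFin_mem _ _ _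
        rw [← heq] at hm1
        exact absurd hm1 (Finset.mem_compl.mp hm2)
      · rw [hjr, hjr] at heq
        have := ((S.1ᶜ).orderEmbOfFin (hcompl S)).injective heq
        rw [this]
    have hbij := Finite.injective_iff_bijective.mp hinj
    set π : Equiv.Perm (Fin N) := Equiv.ofBijective _ hbij with hπ
    have hjp : join (ρ S) (κ ⟨S.1ᶜ, hcompl S⟩) = ⇑π := rfl
    rw [hdgdef]
    show M S ⟨S.1ᶜ, hcompl S⟩ ≠ 0
    rw [show M S ⟨S.1ᶜ, hcompl S⟩ = X (join (ρ S) (κ ⟨S.1ᶜ, hcompl S⟩)) from rfl, hjp, hXperm]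
    refine mul_ne_zero ?_ h0
    rcases Int.units_eq_one_or (Equiv.Perm.sign π) with h | h <;> simp [h]
  -- M * Q is diagonal
  have hMQ : M * Q = Matrix.diagonal dg := by
    ext S S'
    rw [Matrix.mul_apply]
    have hterm : ∀ T, M S T * Q T S' =
        if T = (⟨S'.1ᶜ, hcompl S'⟩ : {S : Finset (Fin N) // S.card = g}) then M S T else 0 := by
      intro T
      by_cases hT : T = ⟨S'.1ᶜ, hcompl S'⟩
      · subst hT; simp [hQ]
      · have hT' : T.1 ≠ S'.1ᶜ := fun h => hT (Subtype.ext h)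
        simp [hQ, hT, hT']
    rw [Finset.sum_congr rfl (fun T _ => hterm T), Finset.sum_ite_eq' Finset.univ]
    simp only [Finset.mem_univ, if_true]
    rcases eq_or_ne S S' with rfl | hne
    · rw [Matrix.diagonal_apply_eq]
    · rw [Matrix.diagonal_apply_ne _ hne]
      exact hoff S S' hne
  -- rank lower bound
  have hlow : Fintype.card {S : Finset (Fin N) // S.card = h2} ≤ M.rank := by
    have h1 : (Matrix.diagonal dg).rank = Fintype.card {S : Finset (Fin N) // S.card = h2} := by
      rw [Matrix.rank_diagonal]
      exact Fintype.card_congr (Equiv.subtypeUnivEquiv hdg)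
    calc Fintype.card {S : Finset (Fin N) // S.card = h2}
        = (Matrix.diagonal dg).rank := h1.symm
      _ = (M * Q).rank := by rw [hMQ]
      _ ≤ M.rank := Matrix.rank_mul_le_left M Q
  have hcard : Fintype.card {S : Finset (Fin N) // S.card = h2} = N.choose h2 := by
    rw [Fintype.card_finset_len]
    simp
  omega

theorem tnn_antisym_rank_lower_bound {N d m : ℕ} (hN : 1 ≤ N) (hd : 1 ≤ d) (hm : 1 ≤ m)
    (p : ℕ) (σ : ℂ → ℂ)
    (a : Fin p → Fin N → Fin d → Fin m → ℂ)
    (c : Fin p → Fin N → Fin d → ℂ)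
    (ω b : Fin N → Fin d → Fin m → ℂ)
    (f : (Fin N → Fin d → ℝ) → ℂ)
    (hf : ∀ r : Fin N → Fin d → ℝ, f r = ∑ i, ∏ j, ∏ k,
      ((∑ ℓ, a i j k ℓ * σ (ω j k ℓ * (r j k : ℂ) + b j k ℓ)) + c i j k))
    (hanti : IsAntisymFun f) (hf0 : f ≠ 0) :
    N.choose (N / 2) ≤ p := by
  obtain ⟨r0, hr0⟩ : ∃ r, f r ≠ 0 := by
    by_contra h
    push_neg at h
    exact hf0 (funext h)
  refine antisym_tensor_rank_aux
    (fun i j n => ∏ k, ((∑ ℓ, a i j k ℓ * σ (ω j k ℓ * (r0 n k : ℂ) + b j k ℓ)) + c i j k))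
    (fun ℓ => f (fun j => r0 (ℓ j))) (fun ℓ => hf _)
    (fun π ℓ => hanti π (fun j => r0 (ℓ j))) hr0
end

section
/- Let Ω be a type, N ≥ 1 a natural number, and V a finite-dimensional ℂ-linear subspace of the space of functions Ω → ℂ. Suppose f : (Fin N → Ω) → ℂ is antisymmetric, not identically zero, and there exist p ∈ ℕ and functions ψ : Fin p → Fin N → (Ω → ℂ) with each ψ(i)(j) ∈ V such that f(r) = ∑_{i=1}^p ∏_j ψ(i)(j)(r(j)) for all r. Then p ≥ binom(N, ⌊N/2⌋). -/
open scoped BigOperators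

theorem tpf_rank_lower_bound_finiteDimensional {Ω : Type*} {N : ℕ} (hN : 1 ≤ N)
    (V : Submodule ℂ (Ω → ℂ)) (hV : FiniteDimensional ℂ V)
    (f : (Fin N → Ω) → ℂ) (hanti : IsAntisymFun f) (hf0 : f ≠ 0)
    {p : ℕ} (ψ : Fin p → Fin N → Ω → ℂ)
    (hspan : ∀ i j, ψ i j ∈ V)
    (hrep : ∀ r : Fin N → Ω, f r = ∑ i, ∏ j, ψ i j (r j)) :
    N.choose (N / 2) ≤ p := by
  classical
  obtain ⟨r₀, hr₀⟩ : ∃ r, f r ≠ 0 := by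
    by_contra h
    push_neg at h
    exact hf0 (funext fun r => h r)
  set m := N / 2 with hmdef
  set n := N - m with hndef
  have hmn : m + n = N := by omega
  let e : Fin m ⊕ Fin n ≃ Fin N := finSumFinEquiv.trans (finCongr hmn)
  -- f vanishes on tuples with a repeated entry
  have hvanish : ∀ (r : Fin N → Ω) (j₁ j₂ : Fin N), j₁ ≠ j₂ → r j₁ = r j₂ → f r = 0 := by
    intro r j₁ j₂ hne heq
    have h2 : r ∘ (Equiv.swap j₁ j₂) = r := by
      funext j
      simp only [Function.comp_apply]
      rcases eq_or_ne j j₁ with rfl | hj1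
      · rw [Equiv.swap_apply_left]; exact heq.symm
      rcases eq_or_ne j j₂ with rfl | hj2
      · rw [Equiv.swap_apply_right]; exact heq
      · rw [Equiv.swap_apply_of_ne_of_ne hj1 hj2]
    have h1 := hanti (Equiv.swap j₁ j₂) r
    rw [h2, Equiv.Perm.sign_swap hne] at h1
    push_cast at h1
    linear_combination h1 / 2
  let ι := {S : Finset (Fin N) // S.card = m}
  have hcardcompl : ∀ S : ι, (S.1ᶜ).card = n := by
    intro S
    simp only [Finset.card_compl, S.2, Fintype.card_fin]
    exact hndef.symm
  let eS : ι → Fin m → Fin N := fun S a => (S.1.orderIsoOfFin S.2 a : Fin N)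
  let cS : ι → Fin n → Fin N := fun S b => ((S.1ᶜ).orderIsoOfFin (hcardcompl S) b : Fin N)
  have heS_mem : ∀ S a, eS S a ∈ S.1 := fun S a => (S.1.orderIsoOfFin S.2 a).2
  have hcS_mem : ∀ S b, cS S b ∈ S.1ᶜ := fun S b => ((S.1ᶜ).orderIsoOfFin (hcardcompl S) b).2
  have heS_inj : ∀ S, Function.Injective (eS S) := by
    intro S a a' h
    exact (S.1.orderIsoOfFin S.2).injective (Subtype.ext h)
  have hcS_inj : ∀ S, Function.Injective (cS S) := by
    intro S b b' h
    exact ((S.1ᶜ).orderIsoOfFin (hcardcompl S)).injective (Subtype.ext h)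
  let K : ι → ι → Fin N → Fin N := fun S T j => Sum.elim (eS S) (cS T) (e.symm j)
  have hKl : ∀ S T a, K S T (e (Sum.inl a)) = eS S a := by
    intro S T a; simp [K]
  have hKr : ∀ S T b, K S T (e (Sum.inr b)) = cS T b := by
    intro S T b; simp [K]
  let A : Matrix ι ι ℂ := Matrix.of fun S T => f (fun j => r₀ (K S T j))
  -- off-diagonal entries vanish
  have hoff : ∀ S T : ι, S ≠ T → A S T = 0 := by
    intro S T hST
    obtain ⟨x, hxS, hxT⟩ : ∃ x, x ∈ S.1 ∧ x ∉ T.1 := by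
      by_contra h
      push_neg at h
      exact hST (Subtype.ext (Finset.eq_of_subset_of_card_le h (by rw [S.2, T.2])))
    obtain ⟨a, ha⟩ := (S.1.orderIsoOfFin S.2).surjective ⟨x, hxS⟩
    obtain ⟨b, hb⟩ := ((T.1ᶜ).orderIsoOfFin (hcardcompl T)).surjective ⟨x, Finset.mem_compl.2 hxT⟩
    have ha' : eS S a = x := congrArg Subtype.val ha
    have hb' : cS T b = x := congrArg Subtype.val hb
    apply hvanish _ (e (Sum.inl a)) (e (Sum.inr b))
    · exact e.injective.ne (by simp)
    · rw [hKl, hKr, ha', hb']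
  -- diagonal entries are nonzero
  have hdiag : ∀ S : ι, A S S ≠ 0 := by
    intro S
    have hinj : Function.Injective (K S S) := by
      have helim : Function.Injective (Sum.elim (eS S) (cS S)) := by
        intro z z' h
        rcases z with a | b <;> rcases z' with a' | b' <;>
            simp only [Sum.elim_inl, Sum.elim_inr] at h
        · exact congrArg Sum.inl (heS_inj S h)
        · exact absurd (h ▸ heS_mem S a) (Finset.mem_compl.1 (hcS_mem S b'))
        · exact absurd (h.symm ▸ hcS_mem S b) (by simp [heS_mem S a'])
        · exact congrArg Sum.inr (hcS_inj S h)
      exact helim.comp e.symm.injective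
    have hbij := (Finite.injective_iff_bijective).1 hinj
    let σ : Equiv.Perm (Fin N) := Equiv.ofBijective _ hbij
    have hAss : A S S = f (r₀ ∘ σ) := rfl
    rw [hAss, hanti σ r₀]
    apply mul_ne_zero _ hr₀
    rcases Int.units_eq_one_or (Equiv.Perm.sign σ) with h | h <;> simp [h]
  -- factorization through p
  let U : Matrix ι (Fin p) ℂ := Matrix.of fun S i => ∏ a, ψ i (e (Sum.inl a)) (r₀ (eS S a))
  let W : Matrix (Fin p) ι ℂ := Matrix.of fun i T => ∏ b, ψ i (e (Sum.inr b)) (r₀ (cS T b))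
  have hfact : A = U * W := by
    ext S T
    simp only [A, U, W, Matrix.mul_apply, Matrix.of_apply]
    rw [hrep]
    apply Finset.sum_congr rfl
    intro i _
    rw [← Equiv.prod_comp e (fun j => ψ i j (r₀ (K S T j))), Fintype.prod_sum_type]
    congr 1
    · exact Finset.prod_congr rfl fun a _ => by rw [hKl]
    · exact Finset.prod_congr rfl fun b _ => by rw [hKr]
  have hAdiag : A = Matrix.diagonal (fun S => A S S) := by
    ext S T
    rcases eq_or_ne S T with rfl | h
    · simp
    · rw [Matrix.diagonal_apply_ne _ h]
      exact hoff S T h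
  have hunit : IsUnit A := by
    rw [hAdiag, Matrix.isUnit_diagonal]
    exact isUnit_iff_exists_inv.2 ⟨fun S => (A S S)⁻¹,
      funext fun S => mul_inv_cancel₀ (hdiag S)⟩
  have h1 : A.rank = Fintype.card ι := Matrix.rank_of_isUnit A hunit
  have h2 : A.rank ≤ p := by
    rw [hfact]
    exact le_trans (Matrix.rank_mul_le_right U W)
      (le_trans (Matrix.rank_le_card_height W) (by simp))
  have hcard : Fintype.card ι = N.choose m := by
    have h := Fintype.card_finset_len (α := Fin N) m
    rw [Fintype.card_fin] at h
    exact (Fintype.card_congr (Equiv.refl _)).trans h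
  omega
end
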